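/- arXiv:1503.04548 — 7 statements merged into one kernel-verified Lean document; each statement's English description precedes it below -/
import Mathlib

section
/- If the Mangasarian–Fromovitz constraint qualification holds at a feasible point x̄ of the system q_i(x)=0 for i∈E, q_i(x)≤0 for i∈I (with each q_i continuously differentiable), then there exists κ>0 such that ‖∇q(x̄)*λ‖ ≥ ‖λ‖/κ for all λ ∈ N_Θ(q(x̄)), where Θ = {0}^{l₁} × ℝ^{l₂}_- and N_Θ denotes the normal cone of convex analysis. -/
open Metric Set Filter Topology
open scoped RealInnerProductSpace NNReal

noncomputable section

abbrev En (n : ℕ) : Type := EuclideanSpace ℝ (Fin n)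

variable (n l₁ l₂ : ℕ) (q : Fin (l₁ + l₂) → En n → ℝ) (xb : En n) (φ : En n → ℝ)

/-- Feasibility for the constraint system `q i x = 0` (i ∈ E), `q i x ≤ 0` (i ∈ I). -/
def Feas (x : En n) : Prop :=
  ∀ i : Fin (l₁ + l₂), ((i : ℕ) < l₁ → q i x = 0) ∧ (l₁ ≤ (i : ℕ) → q i x ≤ 0)

/-- The feasible (constraint) set Γ. -/
def Gam : Set (En n) := {x | Feas n l₁ l₂ q x}

/-- The normal cone `N_Θ(q(x))` to `Θ = {0}^{l₁} × ℝ^{l₂}_-`, described coordinatewise. -/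
def NTheta (x : En n) : Set (En (l₁ + l₂)) :=
  {lam | ∀ i : Fin (l₁ + l₂), l₁ ≤ (i : ℕ) → 0 ≤ lam i ∧ (q i x ≠ 0 → lam i = 0)}

/-- `∇q(x)*λ = ∑ i λ_i ∇q_i(x)`, as a continuous linear functional. -/
def gradSum (x : En n) (lam : En (l₁ + l₂)) : En n →L[ℝ] ℝ :=
  ∑ i, lam i • fderiv ℝ (q i) x

/-- The set of Lagrange multipliers Λ(x, x*) (with x* represented as a functional ξ). -/
def LamSet (x : En n) (ξ : En n →L[ℝ] ℝ) : Set (En (l₁ + l₂)) :=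
  {lam | lam ∈ NTheta n l₁ l₂ q x ∧ gradSum n l₁ l₂ q x lam = ξ}

/-- The Hessian quadratic/bilinear form `⟨v, ∇²q_i(x) w⟩`. -/
def hessQ (i : Fin (l₁ + l₂)) (x v w : En n) : ℝ :=
  fderiv ℝ (fderiv ℝ (q i)) x v w

/-- `⟨v, ∇²⟨λ,q⟩(x) v⟩`. -/
def quadF (x v : En n) (lam : En (l₁ + l₂)) : ℝ :=
  ∑ i, lam i * hessQ n l₁ l₂ q i x v v

/-- The multiplier set in direction v: maximizers of `λ ↦ ⟨v, ∇²⟨λ,q⟩(x)v⟩` over Λ(x,ξ). -/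
def LamDir (x : En n) (ξ : En n →L[ℝ] ℝ) (v : En n) : Set (En (l₁ + l₂)) :=
  {lam | lam ∈ LamSet n l₁ l₂ q x ξ ∧
    ∀ μ ∈ LamSet n l₁ l₂ q x ξ, quadF n l₁ l₂ q x v μ ≤ quadF n l₁ l₂ q x v lam}

/-- The regular (Fréchet) normal cone to Γ at x, as the polar of the contingent cone. -/
def NhatF (x : En n) : Set (En n →L[ℝ] ℝ) :=
  {ξ | ∀ u ∈ tangentConeAt ℝ (Gam n l₁ l₂ q) x, ξ u ≤ 0}

/-- The limiting (Mordukhovich) normal cone to Γ at x. -/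
def Nlim (x : En n) : Set (En n →L[ℝ] ℝ) :=
  {ξ | ∃ xs : ℕ → En n, ∃ ξs : ℕ → (En n →L[ℝ] ℝ),
    (∀ k, xs k ∈ Gam n l₁ l₂ q ∧ ξs k ∈ NhatF n l₁ l₂ q (xs k)) ∧
    Tendsto xs atTop (𝓝 x) ∧ Tendsto ξs atTop (𝓝 ξ)}

/-- The critical cone `K(x, x*) = T_Γ(x) ∩ {x*}⊥`. -/
def Kcone (x : En n) (ξ : En n →L[ℝ] ℝ) : Set (En n) :=
  tangentConeAt ℝ (Gam n l₁ l₂ q) x ∩ {v | ξ v = 0}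

/-- MSCQ: metric subregularity of `x ↦ q(x) − Θ` at `(x̄, 0)`, in residual form. -/
def MSCQ : Prop :=
  ∃ κ > (0 : ℝ), ∃ U ∈ 𝓝 xb, ∀ x ∈ U,
    Metric.infDist x (Gam n l₁ l₂ q) ≤
      κ * ((∑ i ∈ Finset.univ.filter (fun i : Fin (l₁ + l₂) => (i : ℕ) < l₁), |q i x|) +
        ∑ i ∈ Finset.univ.filter (fun i : Fin (l₁ + l₂) => l₁ ≤ (i : ℕ)), max (q i x) 0)

/-- MFCQ at x̄. -/
def MFCQ : Prop :=
  LinearIndependent ℝ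
      (fun i : {i : Fin (l₁ + l₂) // (i : ℕ) < l₁} => fderiv ℝ (q i.1) xb) ∧
  ∃ u : En n, (∀ i : Fin (l₁ + l₂), (i : ℕ) < l₁ → fderiv ℝ (q i) xb u = 0) ∧
    (∀ i : Fin (l₁ + l₂), l₁ ≤ (i : ℕ) → q i xb = 0 → fderiv ℝ (q i) xb u < 0)

/-- BEPP at x̄: linear independence of equality gradients plus a uniform bound on
extreme points of the multiplier sets near x̄. -/
def BEPP : Prop :=
  LinearIndependent ℝ
      (fun i : {i : Fin (l₁ + l₂) // (i : ℕ) < l₁} => fderiv ℝ (q i.1) xb) ∧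
  ∃ U ∈ 𝓝 xb, ∃ κ > (0 : ℝ), ∀ x ∈ U, x ∈ Gam n l₁ l₂ q →
    ∀ ξ : En n →L[ℝ] ℝ, ∀ lam ∈ Set.extremePoints ℝ (LamSet n l₁ l₂ q x ξ),
      ‖lam‖ ≤ κ * ‖ξ‖

/-- Active constraint indices at x̄ (all equality indices and active inequality indices). -/
def ActiveIdx : Set (Fin (l₁ + l₂)) := {i | (i : ℕ) < l₁ ∨ q i xb = 0}

/-- Rank of the gradient family `{∇q_i(x) | i ∈ A}`. -/
def rankA (x : En n) (A : Finset (Fin (l₁ + l₂))) : ℕ :=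
  Module.finrank ℝ
    ↥(Submodule.span ℝ ((fun i => fderiv ℝ (q i) x) '' (↑A : Set (Fin (l₁ + l₂)))))

/-- CRCQ at x̄. -/
def CRCQ : Prop :=
  ∃ U ∈ 𝓝 xb, ∀ A : Finset (Fin (l₁ + l₂)), ↑A ⊆ ActiveIdx n l₁ l₂ q xb →
    ∀ x ∈ U, rankA n l₁ l₂ q x A = rankA n l₁ l₂ q xb A

/-- The KKT condition at x̄ for minimizing φ over Γ. -/
def KKT : Prop :=
  ∃ lam ∈ NTheta n l₁ l₂ q xb, fderiv ℝ φ xb + gradSum n l₁ l₂ q xb lam = 0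

/-- The set Λ̄_E of extreme multipliers in nonzero critical directions. -/
def LamBarE : Set (En (l₁ + l₂)) :=
  ⋃ v ∈ (Kcone n l₁ l₂ q xb (-(fderiv ℝ φ xb)) \ {0}),
    LamDir n l₁ l₂ q xb (-(fderiv ℝ φ xb)) v ∩
      Set.extremePoints ℝ (LamSet n l₁ l₂ q xb (-(fderiv ℝ φ xb)))

/-- The localized argminimum set M_γ(v*) of the tilted problem. -/
def ArgminSet (γ : ℝ) (v : En n) : Set (En n) :=
  {x | x ∈ Gam n l₁ l₂ q ∧ x ∈ Metric.closedBall xb γ ∧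
    ∀ y, y ∈ Gam n l₁ l₂ q → y ∈ Metric.closedBall xb γ →
      φ x - @inner ℝ _ _ v x ≤ φ y - @inner ℝ _ _ v y}

/-- Tilt-stable local minimizer of φ over Γ with modulus κ. -/
def TiltStableMod (κ : ℝ) : Prop :=
  ∃ γ > (0 : ℝ), ∃ δ > (0 : ℝ), ∃ m : En n → En n, m 0 = xb ∧
    LipschitzOnWith (Real.toNNReal κ) m (Metric.ball (0 : En n) δ) ∧
    ∀ v ∈ Metric.ball (0 : En n) δ, ArgminSet n l₁ l₂ q xb φ γ v = {m v}

/-- Tilt-stable local minimizer (no modulus specified). -/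
def TiltStable : Prop :=
  ∃ K : ℝ≥0, ∃ γ > (0 : ℝ), ∃ δ > (0 : ℝ), ∃ m : En n → En n, m 0 = xb ∧
    LipschitzOnWith K m (Metric.ball (0 : En n) δ) ∧
    ∀ v ∈ Metric.ball (0 : En n) δ, ArgminSet n l₁ l₂ q xb φ γ v = {m v}

end

/-!
Under MFCQ the map `λ ↦ ∇q(x̄)*λ` vanishes on `N_Θ(q(x̄))` only at `λ = 0`: evaluating at the
MFCQ direction `u` gives a sum of nonpositive terms, which kills the active inequality multipliers,
and linear independence of the equality gradients kills the rest. As `N_Θ(q(x̄))` is a closed cone,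
the minimum of `‖∇q(x̄)*λ‖` over its (compact) unit sphere is a positive lower bound `1/κ`.
-/

theorem LinearMap.exists_pos_mul_norm_le_of_isClosed_cone {E F : Type*}
    [NormedAddCommGroup E] [NormedSpace ℝ E] [FiniteDimensional ℝ E]
    [NormedAddCommGroup F] [NormedSpace ℝ F] (f : E →ₗ[ℝ] F) {K : Set E}
    (hK : IsClosed K) (hsmul : ∀ x ∈ K, ∀ c : ℝ, 0 < c → c • x ∈ K)
    (hker : ∀ x ∈ K, f x = 0 → x = 0) :
    ∃ m > 0, ∀ x ∈ K, m * ‖x‖ ≤ ‖f x‖ := by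
  have hpos : ∀ x ∈ K ∩ sphere 0 1, 0 < ‖f x‖ := fun x hx =>
    norm_pos_iff.2 fun h => ne_of_mem_sphere hx.2 one_ne_zero (hker x hx.1 h)
  obtain ⟨m, hm, hmin⟩ := ((isCompact_sphere (0 : E) 1).inter_left hK).exists_forall_le'
    f.continuous_of_finiteDimensional.norm.continuousOn hpos
  refine ⟨m, hm, fun x hx => ?_⟩
  rcases eq_or_ne x 0 with rfl | hx0
  · simp
  have hnx : 0 < ‖x‖ := norm_pos_iff.2 hx0
  have hunit : ‖x‖⁻¹ • x ∈ K ∩ sphere 0 1 :=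
    ⟨hsmul x hx _ (inv_pos.2 hnx), by simp [norm_smul, hnx.ne']⟩
  have := hmin _ hunit
  rw [map_smul, norm_smul, Real.norm_of_nonneg (inv_nonneg.2 hnx.le), le_inv_mul_iff₀ hnx]
    at this
  linarith

section

variable {n l₁ l₂ : ℕ} {q : Fin (l₁ + l₂) → En n → ℝ} {xb : En n}

variable (n l₁ l₂ q xb) in
noncomputable def gradSumₗ : En (l₁ + l₂) →ₗ[ℝ] (En n →L[ℝ] ℝ) where
  toFun := gradSum n l₁ l₂ q xb
  map_add' lam μ := by simp [gradSum, add_smul, Finset.sum_add_distrib]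
  map_smul' c lam := by simp [gradSum, Finset.smul_sum, smul_smul]

theorem isClosed_NTheta : IsClosed (NTheta n l₁ l₂ q xb) := by
  simp only [NTheta, ofPred_forall]
  exact isClosed_iInter fun i => isClosed_iInter fun _ =>
    (isClosed_le continuous_const (PiLp.continuous_apply 2 _ i)).and <|
      isClosed_imp isOpen_const (isClosed_eq (PiLp.continuous_apply 2 _ i) continuous_const)

theorem smul_mem_NTheta {lam : En (l₁ + l₂)} (hlam : lam ∈ NTheta n l₁ l₂ q xb) {c : ℝ}
    (hc : 0 < c) : c • lam ∈ NTheta n l₁ l₂ q xb := fun i hi =>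
  ⟨mul_nonneg hc.le (hlam i hi).1, fun hne => by simp [(hlam i hi).2 hne]⟩

theorem MFCQ.eq_zero_of_gradSum_eq_zero (hmfcq : MFCQ n l₁ l₂ q xb) {lam : En (l₁ + l₂)}
    (hlam : lam ∈ NTheta n l₁ l₂ q xb) (h0 : gradSum n l₁ l₂ q xb lam = 0) : lam = 0 := by
  obtain ⟨hLI, u, hu_eq, hu_ineq⟩ := hmfcq
  have hterm_nonpos : ∀ i ∈ Finset.univ, lam i * fderiv ℝ (q i) xb u ≤ 0 := by
    intro i _
    by_cases hi : l₁ ≤ (i : ℕ)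
    · by_cases hact : q i xb = 0
      · exact mul_nonpos_of_nonneg_of_nonpos (hlam i hi).1 (hu_ineq i hi hact).le
      · simp [(hlam i hi).2 hact]
    · simp [hu_eq i (by omega)]
  have hsum : ∑ i, lam i * fderiv ℝ (q i) xb u = 0 := by
    simpa [gradSum] using congrArg (· u) h0
  have hineq : ∀ i : Fin (l₁ + l₂), l₁ ≤ (i : ℕ) → lam i = 0 := by
    intro i hi
    by_cases hact : q i xb = 0
    · have := (Finset.sum_eq_zero_iff_of_nonpos hterm_nonpos).1 hsum i (Finset.mem_univ i)
      exact (mul_eq_zero.1 this).resolve_right (hu_ineq i hi hact).ne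
    · exact (hlam i hi).2 hact
  have hsub : ∑ j : {i : Fin (l₁ + l₂) // (i : ℕ) < l₁}, lam j.1 • fderiv ℝ (q j.1) xb = 0 := by
    have hrest : ∑ j : {i : Fin (l₁ + l₂) // ¬(i : ℕ) < l₁}, lam j.1 • fderiv ℝ (q j.1) xb = 0 :=
      Finset.sum_eq_zero fun j _ => by simp [hineq j.1 (not_lt.1 j.2)]
    rw [← h0, gradSum, ← Fintype.sum_subtype_add_sum_subtype (fun i : Fin (l₁ + l₂) => (i : ℕ) < l₁),
      hrest, add_zero]
  have heq := Fintype.linearIndependent_iff.1 hLI (fun j => lam j.1) hsub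
  ext i
  by_cases hi : (i : ℕ) < l₁
  · exact heq ⟨i, hi⟩
  · exact hineq i (not_lt.1 hi)

end

theorem stmt0_general (n l₁ l₂ : ℕ) (q : Fin (l₁ + l₂) → En n → ℝ) (xb : En n)
    (hmfcq : MFCQ n l₁ l₂ q xb) :
    ∃ κ > (0 : ℝ), ∀ lam ∈ NTheta n l₁ l₂ q xb,
      ‖gradSum n l₁ l₂ q xb lam‖ ≥ ‖lam‖ / κ := by
  obtain ⟨m, hm, hbound⟩ := (gradSumₗ n l₁ l₂ q xb).exists_pos_mul_norm_le_of_isClosed_cone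
    isClosed_NTheta (fun _ hlam _ hc => smul_mem_NTheta hlam hc)
    (fun _ hlam h0 => hmfcq.eq_zero_of_gradSum_eq_zero hlam h0)
  refine ⟨m⁻¹, inv_pos.2 hm, fun lam hlam => ?_⟩
  rw [div_inv_eq_mul, mul_comm]
  exact hbound lam hlam

/-- MFCQ implies the uniform lower bound ‖∇q(x̄)*λ‖ ≥ ‖λ‖/κ on N_Θ(q(x̄)). -/
theorem stmt0 (n l₁ l₂ : ℕ) (q : Fin (l₁ + l₂) → En n → ℝ) (xb : En n)
    (hq : ∀ i, ContDiff ℝ 1 (q i)) (hfeas : Feas n l₁ l₂ q xb)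
    (hmfcq : MFCQ n l₁ l₂ q xb) :
    ∃ κ > (0 : ℝ), ∀ lam ∈ NTheta n l₁ l₂ q xb,
      ‖gradSum n l₁ l₂ q xb lam‖ ≥ ‖lam‖ / κ :=
  stmt0_general n l₁ l₂ q xb hmfcq
end

section
/- The full rank constraint qualification implies the constant rank constraint qualification: if for every subset A of the active constraint indices at x̄ one has rank{∇q_i(x̄) | i∈A} = min{|A|, n}, then there is a neighborhood U of x̄ such that for every subset A of the active constraint indices at x̄, the family {∇q_i(x) | i∈A} has the same rank for all x ∈ U. -/
open Metric Set Filter Topology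
open scoped RealInnerProductSpace NNReal

/-
Linear independence of finitely many vectors is an open condition, so the rank of a continuously
varying family of vectors can only jump up near a point. Under FRCQ the rank of the active gradients
indexed by `A` already attains its a priori maximum `min |A| n`, hence it is locally constant.
-/

theorem finrank_continuousLinearMap_scalar (𝕜 E : Type*) [NontriviallyNormedField 𝕜]
    [CompleteSpace 𝕜] [NormedAddCommGroup E] [NormedSpace 𝕜 E] [FiniteDimensional 𝕜 E] :
    Module.finrank 𝕜 (E →L[𝕜] 𝕜) = Module.finrank 𝕜 E := by
  rw [← (LinearMap.toContinuousLinearMap (E := E) (F' := 𝕜)).finrank_eq]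
  exact Module.finrank_linearMap_self 𝕜 𝕜 E

theorem eventually_finrank_span_range_le {𝕜 X ι M : Type*} [NontriviallyNormedField 𝕜]
    [CompleteSpace 𝕜] [TopologicalSpace X] [Finite ι] [NormedAddCommGroup M] [NormedSpace 𝕜 M]
    {g : X → ι → M} {x₀ : X} (hg : ContinuousAt g x₀) :
    ∀ᶠ x in 𝓝 x₀, Module.finrank 𝕜 (Submodule.span 𝕜 (range (g x₀))) ≤
      Module.finrank 𝕜 (Submodule.span 𝕜 (range (g x))) := by
  obtain ⟨κ, a, ha, hspan, hli⟩ := exists_linearIndependent' 𝕜 (g x₀)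
  have : Finite κ := Finite.of_injective a ha
  cases nonempty_fintype κ
  have hga : ContinuousAt (fun x => g x ∘ a) x₀ :=
    continuousAt_pi.2 fun k => continuousAt_pi.1 hg (a k)
  filter_upwards [hga.eventually hli.eventually] with x hx
  have := Module.Finite.span_of_finite 𝕜 (finite_range (g x))
  calc Module.finrank 𝕜 (Submodule.span 𝕜 (range (g x₀)))
      = Fintype.card κ := by rw [← hspan, finrank_span_eq_card hli]
    _ = Module.finrank 𝕜 (Submodule.span 𝕜 (range (g x ∘ a))) := (finrank_span_eq_card hx).symm
    _ ≤ Module.finrank 𝕜 (Submodule.span 𝕜 (range (g x))) :=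
      Submodule.finrank_mono (Submodule.span_mono (range_comp_subset_range _ _))

section Rank

variable {n l₁ l₂ : ℕ} {q : Fin (l₁ + l₂) → En n → ℝ}

theorem rankA_eq_finrank_span_range (x : En n) (A : Finset (Fin (l₁ + l₂))) :
    rankA n l₁ l₂ q x A =
      Module.finrank ℝ (Submodule.span ℝ (range fun i : A => fderiv ℝ (q i) x)) := by
  rw [rankA, image_eq_range]
  rfl

theorem rankA_le_min_card (x : En n) (A : Finset (Fin (l₁ + l₂))) :
    rankA n l₁ l₂ q x A ≤ min A.card n := by
  refine le_min ?_ ?_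
  · rw [rankA_eq_finrank_span_range, ← Fintype.card_coe A]
    exact finrank_range_le_card _
  · calc rankA n l₁ l₂ q x A ≤ Module.finrank ℝ (En n →L[ℝ] ℝ) := Submodule.finrank_le _
      _ = n := by rw [finrank_continuousLinearMap_scalar, finrank_euclideanSpace_fin]

theorem eventually_rankA_le (hq : ∀ i, Continuous (fderiv ℝ (q i))) (xb : En n)
    (A : Finset (Fin (l₁ + l₂))) : ∀ᶠ x in 𝓝 xb, rankA n l₁ l₂ q xb A ≤ rankA n l₁ l₂ q x A := by
  have hgrad : Continuous fun x (i : A) => fderiv ℝ (q i) x := continuous_pi fun i => hq i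
  simpa only [rankA_eq_finrank_span_range] using
    eventually_finrank_span_range_le (𝕜 := ℝ) hgrad.continuousAt

theorem eventually_rankA_eq_of_eq_min (hq : ∀ i, Continuous (fderiv ℝ (q i))) {xb : En n}
    {A : Finset (Fin (l₁ + l₂))} (hA : rankA n l₁ l₂ q xb A = min A.card n) :
    ∀ᶠ x in 𝓝 xb, rankA n l₁ l₂ q x A = rankA n l₁ l₂ q xb A :=
  (eventually_rankA_le hq xb A).mono fun x hx =>
    le_antisymm ((rankA_le_min_card x A).trans_eq hA.symm) hx

end Rank

theorem stmt2_general (n l₁ l₂ : ℕ) (q : Fin (l₁ + l₂) → En n → ℝ) (xb : En n)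
    (hq : ∀ i, ContDiff ℝ 1 (q i))
    (hfrcq : ∀ A : Finset (Fin (l₁ + l₂)), ↑A ⊆ ActiveIdx n l₁ l₂ q xb →
      rankA n l₁ l₂ q xb A = min A.card n) :
    CRCQ n l₁ l₂ q xb := by
  have hall : ∀ᶠ x in 𝓝 xb, ∀ A : Finset (Fin (l₁ + l₂)),
      ↑A ⊆ ActiveIdx n l₁ l₂ q xb → rankA n l₁ l₂ q x A = rankA n l₁ l₂ q xb A :=
    eventually_all.2 fun A => eventually_imp_distrib_left.2 fun hA =>
      eventually_rankA_eq_of_eq_min (fun i => (hq i).continuous_fderiv one_ne_zero) (hfrcq A hA)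
  exact ⟨_, hall, fun A hA x hx => hx A hA⟩

/-- the full rank constraint qualification implies the constant rank
constraint qualification. -/
theorem stmt2 (n l₁ l₂ : ℕ) (q : Fin (l₁ + l₂) → En n → ℝ) (xb : En n)
    (hq : ∀ i, ContDiff ℝ 1 (q i)) (hfeas : Feas n l₁ l₂ q xb)
    (hfrcq : ∀ A : Finset (Fin (l₁ + l₂)), ↑A ⊆ ActiveIdx n l₁ l₂ q xb →
      rankA n l₁ l₂ q xb A = min A.card n) :
    CRCQ n l₁ l₂ q xb :=
  stmt2_general n l₁ l₂ q xb hq hfrcq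
end

section
/- A Lagrange multiplier λ ∈ Λ(x,x*) is an extreme point of the convex polyhedron Λ(x,x*) if and only if the family of gradients {∇q_i(x) | i ∈ E ∪ I⁺(λ)} is linearly independent, where I⁺(λ) = {i ∈ I | λ_i > 0}. -/
open Metric Set Filter Topology
open scoped RealInnerProductSpace NNReal

/-! Λ(x, x*) is cut out by the equation `∇q(x)*λ = x*` and the sign constraints `λ_i ≥ 0`,
`i ∈ I`, of which only those with `λ_i = 0` are binding at `λ`. Hence `λ ± t c ∈ Λ(x, x*)` for
small `t` exactly when `c` lies in the kernel of `∇q(x)*` and is supported on `E ∪ I⁺(λ)`; and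
any open segment of Λ(x, x*) through `λ` lies in the face `{λ_i = 0, i ∉ E ∪ I⁺(λ)}`, so its
endpoints differ from `λ` by such a `c`. So `λ` is extreme iff no nonzero such `c` exists, i.e. iff
the gradients indexed by `E ∪ I⁺(λ)` are linearly independent. -/

theorem eq_zero_of_mem_extremePoints_of_eventually_add_smul_mem {E : Type*} [AddCommGroup E]
    [Module ℝ E] {A : Set E} {y c : E} (hy : y ∈ A.extremePoints ℝ)
    (hc : ∀ᶠ s in 𝓝 (0 : ℝ), y + s • c ∈ A) : c = 0 := by
  have hc' : ∀ᶠ s in 𝓝 (0 : ℝ), y + (-s) • c ∈ A :=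
    (continuous_neg.tendsto' 0 0 neg_zero).eventually hc
  obtain ⟨t, ⟨h₁, h₂⟩, ht⟩ :=
    (((hc.and hc').filter_mono nhdsWithin_le_nhds).and self_mem_nhdsWithin).exists
      (f := 𝓝[≠] (0 : ℝ))
  have hseg : y ∈ openSegment ℝ (y + t • c) (y + (-t) • c) :=
    ⟨1 / 2, 1 / 2, by norm_num, by norm_num, by norm_num, by module⟩
  exact (smul_eq_zero.mp (add_eq_left.mp (hy.2 h₁ h₂ hseg))).resolve_left ht

theorem linearIndependent_subtype_iff_forall_sum_smul_eq_zero {ι R M : Type*} [Fintype ι]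
    [Ring R] [AddCommGroup M] [Module R M] (f : ι → M) (P : ι → Prop) :
    LinearIndependent R (fun i : Subtype P => f i) ↔
      ∀ c : ι → R, (∀ i, ¬ P i → c i = 0) → ∑ i, c i • f i = 0 → c = 0 := by
  classical
  have hsum : ∀ c : ι → R, (∀ i, ¬ P i → c i = 0) →
      ∑ i, c i • f i = ∑ i : Subtype P, c i • f i := fun c hc => by
    rw [← Fintype.sum_subtype_add_sum_subtype P, add_eq_left]
    exact Finset.sum_eq_zero fun i _ => by rw [hc i i.2, zero_smul]
  rw [Fintype.linearIndependent_iff]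
  refine ⟨fun h c hc hker => funext fun i => ?_, fun h g hg i => ?_⟩
  · by_cases hi : P i
    · exact h (fun j => c j) (hsum c hc ▸ hker) ⟨i, hi⟩
    · exact hc i hi
  · have := h (fun j => if hj : P j then g ⟨j, hj⟩ else 0) (fun j hj => dif_neg hj)
      (by rw [hsum _ fun j hj => dif_neg hj, ← hg]
          exact Finset.sum_congr rfl fun j _ => by rw [dif_pos j.2])
    simpa [i.2] using congrFun this i

section LagrangeMultipliers

variable {n l₁ l₂ : ℕ} {q : Fin (l₁ + l₂) → En n → ℝ} {x : En n} {ξ : En n →L[ℝ] ℝ}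
  {lam μ ν : En (l₁ + l₂)}

theorem gradSum_add_smul (lam : En (l₁ + l₂)) (s : ℝ) (c : Fin (l₁ + l₂) → ℝ) :
    gradSum n l₁ l₂ q x (lam + s • WithLp.toLp 2 c) =
      gradSum n l₁ l₂ q x lam + s • ∑ i, c i • fderiv ℝ (q i) x := by
  simp only [gradSum, PiLp.add_apply, PiLp.smul_apply, smul_eq_mul, add_smul, mul_smul,
    Finset.sum_add_distrib, Finset.smul_sum]

theorem gradSum_sub_gradSum (μ lam : En (l₁ + l₂)) :
    gradSum n l₁ l₂ q x μ - gradSum n l₁ l₂ q x lam =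
      ∑ i, (μ i - lam i) • fderiv ℝ (q i) x := by
  simp only [gradSum, sub_smul, Finset.sum_sub_distrib]

theorem apply_eq_zero_of_mem_LamSet (hlam : lam ∈ LamSet n l₁ l₂ q x ξ) {i : Fin (l₁ + l₂)}
    (hi : ¬ ((i : ℕ) < l₁ ∨ 0 < lam i)) : lam i = 0 := by
  obtain ⟨hE, hpos⟩ := not_or.mp hi
  exact le_antisymm (not_lt.mp hpos) (hlam.1 i (not_lt.mp hE)).1

theorem eventually_add_smul_mem_LamSet (hlam : lam ∈ LamSet n l₁ l₂ q x ξ)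
    (c : Fin (l₁ + l₂) → ℝ) (hc : ∀ i : Fin (l₁ + l₂), ¬ ((i : ℕ) < l₁ ∨ 0 < lam i) → c i = 0)
    (hker : ∑ i, c i • fderiv ℝ (q i) x = 0) :
    ∀ᶠ s in 𝓝 (0 : ℝ), lam + s • WithLp.toLp 2 c ∈ LamSet n l₁ l₂ q x ξ := by
  have hsign : ∀ i : Fin (l₁ + l₂), ∀ᶠ s in 𝓝 (0 : ℝ), l₁ ≤ (i : ℕ) → 0 ≤ lam i + s * c i := by
    intro i
    by_cases hi : (i : ℕ) < l₁ ∨ 0 < lam i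
    · rcases hi with hE | hpos
      · exact Eventually.of_forall fun _ hI => absurd hE (not_lt.mpr hI)
      · have hlim : Tendsto (fun s : ℝ => lam i + s * c i) (𝓝 0) (𝓝 (lam i)) :=
          (by fun_prop : Continuous fun s : ℝ => lam i + s * c i).tendsto' 0 _ (by simp)
        exact (hlim.eventually (lt_mem_nhds hpos)).mono fun _ hs _ => hs.le
    · exact Eventually.of_forall fun _ hI => by
        simpa [hc i hi] using (hlam.1 i hI).1
  filter_upwards [eventually_all.2 hsign] with s hs
  refine ⟨fun i hI => ⟨by simpa using hs i hI, fun hqi => ?_⟩, ?_⟩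
  · have hlam0 : lam i = 0 := (hlam.1 i hI).2 hqi
    have hc0 : c i = 0 := hc i (by simp [hlam0, not_lt.mpr hI])
    simp [hlam0, hc0]
  · rw [gradSum_add_smul, hker, smul_zero, add_zero, hlam.2]

theorem apply_eq_zero_of_mem_openSegment (hμ : μ ∈ LamSet n l₁ l₂ q x ξ)
    (hν : ν ∈ LamSet n l₁ l₂ q x ξ) (hseg : lam ∈ openSegment ℝ μ ν) {i : Fin (l₁ + l₂)}
    (hI : l₁ ≤ (i : ℕ)) (hi : lam i = 0) : μ i = 0 := by
  obtain ⟨a, b, ha, hb, -, rfl⟩ := hseg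
  have hμi := (hμ.1 i hI).1
  have hνi := (hν.1 i hI).1
  simp only [PiLp.add_apply, PiLp.smul_apply, smul_eq_mul] at hi
  nlinarith [mul_nonneg hb.le hνi]

theorem mem_extremePoints_LamSet_iff (hlam : lam ∈ LamSet n l₁ l₂ q x ξ) :
    lam ∈ (LamSet n l₁ l₂ q x ξ).extremePoints ℝ ↔
      ∀ c : Fin (l₁ + l₂) → ℝ, (∀ i : Fin (l₁ + l₂), ¬ ((i : ℕ) < l₁ ∨ 0 < lam i) → c i = 0) →
        ∑ i, c i • fderiv ℝ (q i) x = 0 → c = 0 := by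
  refine ⟨fun hext c hc hker => ?_, fun h => ⟨hlam, fun μ hμ ν hν hseg => ?_⟩⟩
  · have hc0 := eq_zero_of_mem_extremePoints_of_eventually_add_smul_mem hext
      (eventually_add_smul_mem_LamSet hlam c hc hker)
    simpa using congrArg WithLp.ofLp hc0
  · have hoff : ∀ i : Fin (l₁ + l₂), ¬ ((i : ℕ) < l₁ ∨ 0 < lam i) → μ i - lam i = 0 := by
      intro i hi
      have hlam0 := apply_eq_zero_of_mem_LamSet hlam hi
      rw [apply_eq_zero_of_mem_openSegment hμ hν hseg (not_lt.mp (not_or.mp hi).1) hlam0,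
        hlam0, sub_self]
    have hsub := h _ hoff (by rw [← gradSum_sub_gradSum, hμ.2, hlam.2, sub_self])
    ext i
    exact sub_eq_zero.mp (congrFun hsub i)

end LagrangeMultipliers

theorem stmt3_general (n l₁ l₂ : ℕ) (q : Fin (l₁ + l₂) → En n → ℝ) (x : En n)
    (ξ : En n →L[ℝ] ℝ) (lam : En (l₁ + l₂)) (hlam : lam ∈ LamSet n l₁ l₂ q x ξ) :
    lam ∈ Set.extremePoints ℝ (LamSet n l₁ l₂ q x ξ) ↔
      LinearIndependent ℝ
        (fun i : {i : Fin (l₁ + l₂) // (i : ℕ) < l₁ ∨ 0 < lam i} =>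
          fderiv ℝ (q i.1) x) :=
  (mem_extremePoints_LamSet_iff hlam).trans
    (linearIndependent_subtype_iff_forall_sum_smul_eq_zero _ _).symm

/-- λ ∈ Λ(x,x*) is an extreme point of Λ(x,x*) iff the gradients
`{∇q_i(x) | i ∈ E ∪ I⁺(λ)}` are linearly independent. -/
theorem stmt3 (n l₁ l₂ : ℕ) (q : Fin (l₁ + l₂) → En n → ℝ) (x : En n)
    (hq : ∀ i, ContDiff ℝ 1 (q i)) (hfeas : Feas n l₁ l₂ q x)
    (ξ : En n →L[ℝ] ℝ) (lam : En (l₁ + l₂)) (hlam : lam ∈ LamSet n l₁ l₂ q x ξ) :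
    lam ∈ Set.extremePoints ℝ (LamSet n l₁ l₂ q x ξ) ↔
      LinearIndependent ℝ
        (fun i : {i : Fin (l₁ + l₂) // (i : ℕ) < l₁ ∨ 0 < lam i} =>
          fderiv ℝ (q i.1) x) :=
  stmt3_general n l₁ l₂ q x ξ lam hlam
end

section
/- Under MSCQ and BEPP at x̄ ∈ Γ, the indicator function δ_Γ is prox-regular and subdifferentially continuous at x̄ for every subgradient x̄* ∈ ∂δ_Γ(x̄). In particular, there exist r, ε > 0 such that for all x, u ∈ B_ε(x̄) ∩ Γ and all v* ∈ N_Γ(u) ∩ B_ε(x̄*) one has 0 ≥ ⟨v*, x − u⟩ − (r/2)‖x − u‖². -/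
open Metric Set Filter Topology
open scoped RealInnerProductSpace NNReal

/-!
Under MSCQ, every regular normal `ξ` to `Γ` at a feasible `u` near `x̄` has a multiplier
`λ ∈ N_Θ(q(u))`, `∇q(u)*λ = ξ`, with `|λ i| ≤ κ‖ξ‖`. Indeed, the subregularity estimate along
`u + t v` produces a tangent vector within `κ R(v)` of `v`, where `R` is the linearized
residual, so `ξ v ≤ κ‖ξ‖ R(v)` for all `v`; and `κ‖ξ‖ R(v)` is the maximum of `⟨∇q(u)*λ, v⟩`
over the compact convex set of such bounded multipliers, so separation puts `ξ` in its image.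
Complementarity and the Taylor bound for the Lipschitz gradients then give
`ξ(x - u) ≤ (l₁ + l₂) L κ ‖ξ‖ ‖x - u‖²` for feasible `x`, which passes to limiting normals
by continuity.
-/

theorem exists_mem_tangentConeAt_norm_sub_le {E : Type*} [NormedAddCommGroup E]
    [NormedSpace ℝ E] [ProperSpace E] {s : Set E} {u v : E} (hu : u ∈ s) {a : ℝ}
    (h : ∀ ε > 0, ∀ᶠ t in 𝓝[>] (0 : ℝ), infDist (u + t • v) s ≤ t * (a + ε)) :
    ∃ w ∈ tangentConeAt ℝ s u, ‖v - w‖ ≤ a := by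
  have hstep : ∀ k : ℕ, ∃ t : ℝ, 0 < t ∧ t < 1 / (k + 1) ∧
      ∃ p ∈ s, ‖t⁻¹ • (p - u) - v‖ < a + 2 * (1 / (k + 1)) := by
    intro k
    have hk : (0 : ℝ) < 1 / (k + 1) := by positivity
    obtain ⟨t, hdist, ht⟩ := ((h _ hk).and (Ioo_mem_nhdsGT hk)).exists
    have hlt : infDist (u + t • v) s < t * (a + 2 * (1 / (k + 1))) :=
      hdist.trans_lt (by nlinarith [ht.1])
    obtain ⟨p, hp, hdp⟩ := (infDist_lt_iff ⟨u, hu⟩).mp hlt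
    refine ⟨t, ht.1, ht.2, p, hp, ?_⟩
    have heq : t⁻¹ • (p - u) - v = t⁻¹ • (p - (u + t • v)) := by
      rw [smul_sub, smul_sub, smul_add, inv_smul_smul₀ ht.1.ne']; abel
    rw [heq, norm_smul, norm_inv, Real.norm_of_nonneg ht.1.le, ← dist_eq_norm',
      inv_mul_lt_iff₀ ht.1]
    exact hdp
  choose t ht0 ht1 p hp hpv using hstep
  set w' : ℕ → E := fun k => (t k)⁻¹ • (p k - u)
  have hbound : ∀ k, w' k ∈ closedBall (0 : E) (‖v‖ + |a| + 2) := by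
    intro k
    have hk1 : 1 / ((k : ℝ) + 1) ≤ 1 := by
      rw [div_le_one (by positivity)]; linarith [k.cast_nonneg (α := ℝ)]
    rw [mem_closedBall_zero_iff]
    calc ‖w' k‖ ≤ ‖v‖ + ‖w' k - v‖ := norm_le_norm_add_norm_sub' _ _
      _ ≤ ‖v‖ + |a| + 2 := by linarith [hpv k, le_abs_self a]
  obtain ⟨w, -, φ, hφ, hw⟩ := tendsto_subseq_of_bounded isBounded_closedBall hbound
  have hinv : Tendsto (fun k : ℕ => 1 / ((k : ℝ) + 1)) atTop (𝓝 0) :=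
    tendsto_one_div_add_atTop_nhds_zero_nat
  have ht : Tendsto t atTop (𝓝 0) :=
    squeeze_zero (fun k => (ht0 k).le) (fun k => (ht1 k).le) hinv
  refine ⟨w, ?_, ?_⟩
  · refine mem_tangentConeAt_of_seq atTop (fun k => (t (φ k))⁻¹) (fun k => p (φ k) - u) ?_
      (.of_forall fun k => by simpa using hp (φ k)) hw
    have hd : ∀ k, p (φ k) - u = t (φ k) • w' (φ k) := fun k =>
      (smul_inv_smul₀ (ht0 (φ k)).ne' _).symm
    simpa [hd] using ((ht.comp hφ.tendsto_atTop).smul hw)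
  · have hlim : Tendsto (fun k => a + 2 * (1 / ((φ k : ℝ) + 1))) atTop (𝓝 a) := by
      simpa using tendsto_const_nhds.add ((hinv.comp hφ.tendsto_atTop).const_mul 2)
    rw [norm_sub_rev]
    exact le_of_tendsto_of_tendsto' ((hw.sub tendsto_const_nhds).norm) hlim
      fun k => (hpv (φ k)).le

theorem exists_apply_lt_of_notMem {E : Type*} [NormedAddCommGroup E] [InnerProductSpace ℝ E]
    [CompleteSpace E] {S : Set (StrongDual ℝ E)} (hSc : IsCompact S) (hS : Convex ℝ S)
    {ξ : StrongDual ℝ E} (hξ : ξ ∉ S) : ∃ v : E, ∀ η ∈ S, η v < ξ v := by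
  set J := (InnerProductSpace.toDual ℝ E).symm
  have hJ : ∀ η w, ⟪J η, w⟫ = η w := fun _ _ => InnerProductSpace.toDual_symm_apply
  obtain ⟨F, b, hFS, hFξ⟩ := geometric_hahn_banach_closed_point (x := J ξ)
    (hS.linear_image J.toLinearEquiv.toLinearMap) (hSc.image J.continuous).isClosed
    (by rintro ⟨η, hη, hJη⟩; exact hξ (J.injective hJη ▸ hη))
  have hF : ∀ η, F (J η) = η (J F) := fun η => by rw [← hJ F, real_inner_comm, hJ]
  exact ⟨J F, fun η hη => by
    have : F (J η) < b := hFS _ ⟨η, hη, rfl⟩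
    rw [hF] at this hFξ; linarith⟩

theorem exists_lipschitzOnWith_fderiv {ι E F : Type*} [Fintype ι] [NormedAddCommGroup E]
    [NormedSpace ℝ E] [NormedAddCommGroup F] [NormedSpace ℝ F] {f : ι → E → F}
    (hf : ∀ i, ContDiff ℝ 2 (f i)) {s : Set E} (hs : IsCompact s) :
    ∃ L, ∀ i, LipschitzOnWith L (fderiv ℝ (f i)) s := by
  have := fun i => (((hf i).fderiv_right (m := 1) le_rfl).locallyLipschitz.locallyLipschitzOn
    (s := s)).exists_lipschitzOnWith_of_compact hs
  choose K hK using this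
  exact ⟨∑ i, K i, fun i => (hK i).weaken
    (Finset.single_le_sum (fun _ _ => zero_le) (Finset.mem_univ i))⟩

theorem norm_sub_sub_fderiv_le_of_lipschitzOnWith {E F : Type*} [NormedAddCommGroup E]
    [NormedSpace ℝ E] [NormedAddCommGroup F] [NormedSpace ℝ F] {f : E → F} {s : Set E}
    (hs : Convex ℝ s) (hf : ∀ x ∈ s, DifferentiableAt ℝ f x) {L : ℝ≥0}
    (hL : LipschitzOnWith L (fderiv ℝ f) s) {x y : E} (hx : x ∈ s) (hy : y ∈ s) :
    ‖f x - f y - fderiv ℝ f y (x - y)‖ ≤ L * ‖x - y‖ ^ 2 := by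
  have hseg := hs.segment_subset hy hx
  have hbound : ∀ z ∈ segment ℝ y x, ‖fderiv ℝ f z - fderiv ℝ f y‖ ≤ L * ‖x - y‖ := by
    intro z hz
    have hzy : dist z y ≤ dist y x := segment_subset_closedBall_left y x hz
    rw [← dist_eq_norm, ← dist_eq_norm']
    exact (hL.dist_le_mul _ (hseg hz) _ hy).trans (by gcongr)
  calc ‖f x - f y - fderiv ℝ f y (x - y)‖ ≤ L * ‖x - y‖ * ‖x - y‖ :=
        (convex_segment y x).norm_image_sub_le_of_norm_fderiv_le'
          (fun z hz => hf z (hseg hz)) hbound (left_mem_segment ℝ y x) (right_mem_segment ℝ y x)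
    _ = L * ‖x - y‖ ^ 2 := by ring

/-- Indices `i < l₁` are the equality constraints. -/
def violation (l₁ i : ℕ) (s : ℝ) : ℝ := if i < l₁ then |s| else max s 0

section Violation

variable {l₁ i : ℕ}

theorem violation_mul_of_nonneg {t : ℝ} (ht : 0 ≤ t) (s : ℝ) :
    violation l₁ i (t * s) = t * violation l₁ i s := by
  unfold violation; split_ifs
  · rw [abs_mul, abs_of_nonneg ht]
  · rw [mul_max_of_nonneg _ _ ht, mul_zero]

theorem violation_add_le (s r : ℝ) : violation l₁ i (s + r) ≤ violation l₁ i s + |r| := by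
  unfold violation; split_ifs
  · exact abs_add_le s r
  · exact max_le (by linarith [le_max_left s 0, le_abs_self r]) (by positivity)

theorem violation_eq_zero_iff {s : ℝ} :
    violation l₁ i s = 0 ↔ (i < l₁ → s = 0) ∧ (l₁ ≤ i → s ≤ 0) := by
  unfold violation; split_ifs with h
  · simp [h]
  · simp [not_lt.mp h]

theorem exists_mul_eq_violation {c : ℝ} (hc : 0 ≤ c) (s : ℝ) :
    ∃ r, |r| ≤ c ∧ (l₁ ≤ i → 0 ≤ r) ∧ r * s = c * violation l₁ i s := by
  unfold violation
  rcases le_total 0 s with hs | hs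
  · refine ⟨c, by rw [abs_of_nonneg hc], fun _ => hc, ?_⟩
    split_ifs <;> simp [abs_of_nonneg hs, max_eq_left hs]
  · split_ifs
    · exact ⟨-c, by rw [abs_neg, abs_of_nonneg hc], by omega, by rw [abs_of_nonpos hs]; ring⟩
    · exact ⟨0, by simpa, fun _ => le_rfl, by simp [max_eq_right hs]⟩

theorem eventually_violation_add_smul_le {E : Type*} [NormedAddCommGroup E] [NormedSpace ℝ E]
    {f : E → ℝ} {u : E} (hf : DifferentiableAt ℝ f u) (hfu : violation l₁ i (f u) = 0)
    (v : E) {ε : ℝ} (hε : 0 < ε) :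
    ∀ᶠ t in 𝓝[>] (0 : ℝ), violation l₁ i (f (u + t • v)) ≤
      t * ((if f u = 0 then violation l₁ i (fderiv ℝ f u v) else 0) + ε) := by
  have hline : HasLineDerivAt ℝ f (fderiv ℝ f u v) u v := hf.hasFDerivAt.hasLineDerivAt v
  split_ifs with h0
  · filter_upwards [((hasLineDerivAt_iff_isLittleO_nhds_zero.mp hline).def hε).filter_mono
      nhdsWithin_le_nhds, self_mem_nhdsWithin] with t ht (htpos : 0 < t)
    simp only [h0, sub_zero, smul_eq_mul, Real.norm_eq_abs, abs_of_pos htpos] at ht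
    calc violation l₁ i (f (u + t • v))
        = violation l₁ i (t * fderiv ℝ f u v + (f (u + t • v) - t * fderiv ℝ f u v)) := by
          rw [add_sub_cancel]
      _ ≤ t * violation l₁ i (fderiv ℝ f u v) + ε * t := by
          rw [← violation_mul_of_nonneg htpos.le]
          exact (violation_add_le _ _).trans
            (by linarith [le_abs_self (f (u + t • v) - t * fderiv ℝ f u v)])
      _ = t * (violation l₁ i (fderiv ℝ f u v) + ε) := by ring
  · obtain ⟨heq, hle⟩ := violation_eq_zero_iff.mp hfu
    have hi : l₁ ≤ i := not_lt.mp fun h => h0 (heq h)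
    have hcont : Tendsto (fun t : ℝ => f (u + t • v)) (𝓝[>] 0) (𝓝 (f u)) := by
      simpa using (HasDerivAt.continuousAt hline).tendsto.mono_left nhdsWithin_le_nhds
    filter_upwards [hcont.eventually (gt_mem_nhds (lt_of_le_of_ne (hle hi) h0)),
      self_mem_nhdsWithin] with t ht (htpos : 0 < t)
    rw [violation_eq_zero_iff.mpr ⟨fun h => absurd hi (not_le.mpr h), fun _ => ht.le⟩]
    positivity

end Violation

noncomputable section ConstraintSystem

variable {n l₁ l₂ : ℕ} {q : Fin (l₁ + l₂) → En n → ℝ}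

def constraintResidual (q : Fin (l₁ + l₂) → En n → ℝ) (x : En n) : ℝ :=
  ∑ i : Fin (l₁ + l₂), violation l₁ i (q i x)

/-- For `u ∈ Γ`, the one-sided directional derivative of `constraintResidual q` at `u`. -/
def linearizedResidual (q : Fin (l₁ + l₂) → En n → ℝ) (u v : En n) : ℝ :=
  ∑ i : Fin (l₁ + l₂), if q i u = 0 then violation l₁ i (fderiv ℝ (q i) u v) else 0

theorem MSCQ.exists_infDist_le_constraintResidual {xb : En n} (h : MSCQ n l₁ l₂ q xb) :
    ∃ κ > (0 : ℝ), ∃ U ∈ 𝓝 xb, ∀ x ∈ U,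
      infDist x (Gam n l₁ l₂ q) ≤ κ * constraintResidual q x := by
  obtain ⟨κ, hκ, U, hU, hres⟩ := h
  refine ⟨κ, hκ, U, hU, fun x hx => (hres x hx).trans_eq ?_⟩
  simp only [constraintResidual, violation, Finset.sum_ite, not_lt]

theorem violation_eq_zero_of_mem_gam {x : En n} (hx : x ∈ Gam n l₁ l₂ q) (i : Fin (l₁ + l₂)) :
    violation l₁ i (q i x) = 0 :=
  violation_eq_zero_iff.mpr (hx i)

theorem eventually_residual_add_smul_le {u : En n} (hq : ∀ i, DifferentiableAt ℝ (q i) u)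
    (hu : u ∈ Gam n l₁ l₂ q) (v : En n) {ε : ℝ} (hε : 0 < ε) :
    ∀ᶠ t in 𝓝[>] (0 : ℝ),
      constraintResidual q (u + t • v) ≤ t * (linearizedResidual q u v + ε) := by
  set m : ℝ := ((l₁ + l₂ : ℕ) : ℝ)
  have hε' : 0 < ε / (m + 1) := by positivity
  filter_upwards [eventually_all.mpr fun i => eventually_violation_add_smul_le (hq i)
    (violation_eq_zero_of_mem_gam hu i) v hε', self_mem_nhdsWithin] with t ht (htpos : 0 < t)
  have hmε : m * (ε / (m + 1)) ≤ ε := by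
    rw [mul_div_assoc', div_le_iff₀ (by positivity)]; nlinarith
  calc constraintResidual q (u + t • v)
      ≤ ∑ i, t * ((if q i u = 0 then violation l₁ i (fderiv ℝ (q i) u v) else 0) +
          ε / (m + 1)) := Finset.sum_le_sum fun i _ => ht i
    _ = t * (linearizedResidual q u v + m * (ε / (m + 1))) := by
        simp [← Finset.mul_sum, Finset.sum_add_distrib, linearizedResidual, m]
    _ ≤ t * (linearizedResidual q u v + ε) := by gcongr

theorem apply_le_mul_linearizedResidual {u : En n} (hq : ∀ i, DifferentiableAt ℝ (q i) u)
    (hu : u ∈ Gam n l₁ l₂ q) {κ : ℝ} (hκ : 0 ≤ κ)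
    (hmscq : ∀ᶠ x in 𝓝 u, infDist x (Gam n l₁ l₂ q) ≤ κ * constraintResidual q x)
    {ξ : En n →L[ℝ] ℝ} (hξ : ξ ∈ NhatF n l₁ l₂ q u) (v : En n) :
    ξ v ≤ κ * ‖ξ‖ * linearizedResidual q u v := by
  have hline : Tendsto (fun t : ℝ => u + t • v) (𝓝[>] 0) (𝓝 u) :=
    (Continuous.tendsto' (by fun_prop) 0 u (by simp)).mono_left nhdsWithin_le_nhds
  have hdist : ∀ ε > 0, ∀ᶠ t in 𝓝[>] (0 : ℝ),
      infDist (u + t • v) (Gam n l₁ l₂ q) ≤ t * (κ * linearizedResidual q u v + ε) := by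
    intro ε hε
    filter_upwards [hline.eventually hmscq,
      eventually_residual_add_smul_le hq hu v (ε := ε / (κ + 1)) (by positivity),
      self_mem_nhdsWithin] with t hmscq_t hres_t (htpos : 0 < t)
    have hκε : κ * (ε / (κ + 1)) ≤ ε := by
      rw [mul_div_assoc', div_le_iff₀ (by positivity)]; nlinarith
    calc infDist (u + t • v) (Gam n l₁ l₂ q)
        ≤ κ * (t * (linearizedResidual q u v + ε / (κ + 1))) := hmscq_t.trans (by gcongr)
      _ = t * (κ * linearizedResidual q u v + κ * (ε / (κ + 1))) := by ring
      _ ≤ t * (κ * linearizedResidual q u v + ε) := by gcongr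
  obtain ⟨w, hw, hvw⟩ := exists_mem_tangentConeAt_norm_sub_le hu hdist
  calc ξ v = ξ w + ξ (v - w) := by simp
    _ ≤ 0 + ‖ξ‖ * ‖v - w‖ := add_le_add (hξ w hw) ((le_abs_self _).trans (ξ.le_opNorm _))
    _ ≤ κ * ‖ξ‖ * linearizedResidual q u v := by nlinarith [norm_nonneg ξ]

/-- The multipliers `λ ∈ N_Θ(q(u))` with `|λ i| ≤ c` form the product of these intervals. -/
def multiplierRange (q : Fin (l₁ + l₂) → En n → ℝ) (u : En n) (c : ℝ) (i : Fin (l₁ + l₂)) :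
    Set ℝ :=
  if (i : ℕ) < l₁ then Icc (-c) c else if q i u = 0 then Icc 0 c else {0}

def boundedMultipliers (q : Fin (l₁ + l₂) → En n → ℝ) (u : En n) (c : ℝ) :
    Set (En (l₁ + l₂)) :=
  {lam | ∀ i, lam i ∈ multiplierRange q u c i}

theorem boundedMultipliers_eq_preimage (u : En n) (c : ℝ) :
    boundedMultipliers q u c =
      EuclideanSpace.equiv (Fin (l₁ + l₂)) ℝ ⁻¹' univ.pi (multiplierRange q u c) := by
  ext lam; simp [boundedMultipliers]

theorem isCompact_boundedMultipliers (u : En n) (c : ℝ) :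
    IsCompact (boundedMultipliers q u c) := by
  rw [boundedMultipliers_eq_preimage]
  refine (EuclideanSpace.equiv _ ℝ).toHomeomorph.isCompact_preimage.mpr
    (isCompact_univ_pi fun i => ?_)
  unfold multiplierRange; split_ifs
  exacts [isCompact_Icc, isCompact_Icc, isCompact_singleton]

theorem convex_boundedMultipliers (u : En n) (c : ℝ) :
    Convex ℝ (boundedMultipliers q u c) := by
  rw [boundedMultipliers_eq_preimage]
  refine (convex_pi fun i _ => ?_).linear_preimage
    (EuclideanSpace.equiv _ ℝ).toLinearEquiv.toLinearMap
  unfold multiplierRange; split_ifs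
  exacts [convex_Icc _ _, convex_Icc _ _, convex_singleton _]

theorem abs_le_of_mem_boundedMultipliers {u : En n} {c : ℝ} {lam : En (l₁ + l₂)}
    (hlam : lam ∈ boundedMultipliers q u c) (hc : 0 ≤ c) (i : Fin (l₁ + l₂)) : |lam i| ≤ c := by
  have h := hlam i
  unfold multiplierRange at h; split_ifs at h
  · exact abs_le.mpr h
  · rw [abs_of_nonneg h.1]; exact h.2
  · rw [mem_singleton_iff.mp h, abs_zero]; exact hc

/-- Complementarity: `λ i * q i u = 0` while `λ i * q i x ≤ 0`. -/
theorem mul_le_mul_of_mem_boundedMultipliers {u x : En n} {c : ℝ} {lam : En (l₁ + l₂)}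
    (hlam : lam ∈ boundedMultipliers q u c) (hu : u ∈ Gam n l₁ l₂ q) (hx : x ∈ Gam n l₁ l₂ q)
    (i : Fin (l₁ + l₂)) : lam i * q i x ≤ lam i * q i u := by
  have h := hlam i
  unfold multiplierRange at h; split_ifs at h with hi hqu
  · rw [(hx i).1 hi, (hu i).1 hi]
  · rw [hqu, mul_zero]; exact mul_nonpos_of_nonneg_of_nonpos h.1 ((hx i).2 (not_lt.mp hi))
  · simp [mem_singleton_iff.mp h]

def gradSumCLM (q : Fin (l₁ + l₂) → En n → ℝ) (u : En n) :
    En (l₁ + l₂) →L[ℝ] (En n →L[ℝ] ℝ) :=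
  ∑ i, (EuclideanSpace.proj i).smulRight (fderiv ℝ (q i) u)

theorem gradSumCLM_apply (u : En n) (lam : En (l₁ + l₂)) :
    gradSumCLM q u lam = gradSum n l₁ l₂ q u lam := by
  simp [gradSumCLM, gradSum]

theorem gradSum_apply (u : En n) (lam : En (l₁ + l₂)) (v : En n) :
    gradSum n l₁ l₂ q u lam v = ∑ i, lam i * fderiv ℝ (q i) u v := by
  simp [gradSum]

theorem exists_mem_boundedMultipliers_gradSum_apply_eq {c : ℝ} (hc : 0 ≤ c) (u v : En n) :
    ∃ lam ∈ boundedMultipliers q u c,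
      gradSum n l₁ l₂ q u lam v = c * linearizedResidual q u v := by
  have hcoord : ∀ i, ∃ r ∈ multiplierRange q u c i, r * fderiv ℝ (q i) u v =
      c * if q i u = 0 then violation l₁ i (fderiv ℝ (q i) u v) else 0 := by
    intro i
    split_ifs with hqu
    · obtain ⟨r, hr, hr0, hrv⟩ := exists_mul_eq_violation (l₁ := l₁) (i := i) hc
        (fderiv ℝ (q i) u v)
      refine ⟨r, ?_, hrv⟩
      unfold multiplierRange; split_ifs with hi
      · exact abs_le.mp hr
      · exact ⟨hr0 (not_lt.mp hi), (le_abs_self r).trans hr⟩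
    · refine ⟨0, ?_, by simp⟩
      unfold multiplierRange; split_ifs
      · exact ⟨by linarith, hc⟩
      · exact rfl
  choose r hr hrv using hcoord
  refine ⟨WithLp.toLp 2 r, hr, ?_⟩
  rw [gradSum_apply, linearizedResidual, Finset.mul_sum]
  exact Finset.sum_congr rfl fun i _ => hrv i

/-- Linear-programming duality, by separating `ξ` from the image of the multiplier set. -/
theorem exists_mem_boundedMultipliers_gradSum_eq {c : ℝ} (hc : 0 ≤ c) {u : En n}
    {ξ : En n →L[ℝ] ℝ} (h : ∀ v, ξ v ≤ c * linearizedResidual q u v) :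
    ∃ lam ∈ boundedMultipliers q u c, gradSum n l₁ l₂ q u lam = ξ := by
  by_contra hne
  have hξ : ξ ∉ gradSumCLM q u '' boundedMultipliers q u c := by
    rintro ⟨lam, hlam, rfl⟩
    exact hne ⟨lam, hlam, (gradSumCLM_apply u lam).symm⟩
  obtain ⟨v, hv⟩ := exists_apply_lt_of_notMem
    ((isCompact_boundedMultipliers u c).image (gradSumCLM q u).continuous)
    ((convex_boundedMultipliers u c).linear_image (gradSumCLM q u).toLinearMap) hξ
  obtain ⟨lam, hlam, hlamv⟩ := exists_mem_boundedMultipliers_gradSum_apply_eq hc u v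
  have := hv _ ⟨lam, hlam, rfl⟩
  rw [gradSumCLM_apply, hlamv] at this
  linarith [h v]

end ConstraintSystem

section ProxRegularity

variable {n l₁ l₂ : ℕ} {q : Fin (l₁ + l₂) → En n → ℝ} {s : Set (En n)} {L : ℝ≥0}

theorem gradSum_apply_sub_le (hq : ∀ i, Differentiable ℝ (q i)) (hs : Convex ℝ s)
    (hL : ∀ i, LipschitzOnWith L (fderiv ℝ (q i)) s) {x u : En n} (hx : x ∈ s)
    (hxΓ : x ∈ Gam n l₁ l₂ q) (hu : u ∈ s) (huΓ : u ∈ Gam n l₁ l₂ q) {c : ℝ} (hc : 0 ≤ c)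
    {lam : En (l₁ + l₂)} (hlam : lam ∈ boundedMultipliers q u c) :
    gradSum n l₁ l₂ q u lam (x - u) ≤ (l₁ + l₂) * L * c * ‖x - u‖ ^ 2 := by
  have hterm : ∀ i, lam i * fderiv ℝ (q i) u (x - u) ≤ c * (L * ‖x - u‖ ^ 2) := by
    intro i
    have htaylor : |q i x - q i u - fderiv ℝ (q i) u (x - u)| ≤ L * ‖x - u‖ ^ 2 :=
      norm_sub_sub_fderiv_le_of_lipschitzOnWith hs (fun y _ => hq i y) (hL i) hx hu
    have hrem : |lam i * (q i x - q i u - fderiv ℝ (q i) u (x - u))| ≤ c * (L * ‖x - u‖ ^ 2) := by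
      rw [abs_mul]
      exact mul_le_mul (abs_le_of_mem_boundedMultipliers hlam hc i) htaylor (abs_nonneg _) hc
    linarith [mul_le_mul_of_mem_boundedMultipliers hlam huΓ hxΓ i, neg_abs_le
      (lam i * (q i x - q i u - fderiv ℝ (q i) u (x - u)))]
  calc gradSum n l₁ l₂ q u lam (x - u)
      ≤ ∑ _i : Fin (l₁ + l₂), c * (L * ‖x - u‖ ^ 2) := by
        rw [gradSum_apply]; exact Finset.sum_le_sum fun i _ => hterm i
    _ = (l₁ + l₂) * L * c * ‖x - u‖ ^ 2 := by
        simp only [Finset.sum_const, Finset.card_univ, Fintype.card_fin, nsmul_eq_mul,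
          Nat.cast_add]
        ring

variable {κ : ℝ}

theorem apply_sub_le_of_mem_NhatF (hq : ∀ i, Differentiable ℝ (q i)) (hs : Convex ℝ s)
    (hL : ∀ i, LipschitzOnWith L (fderiv ℝ (q i)) s) (hκ : 0 ≤ κ) {x u : En n}
    (hmscq : ∀ᶠ y in 𝓝 u, infDist y (Gam n l₁ l₂ q) ≤ κ * constraintResidual q y)
    (hx : x ∈ s) (hxΓ : x ∈ Gam n l₁ l₂ q) (hu : u ∈ s) (huΓ : u ∈ Gam n l₁ l₂ q)
    {ξ : En n →L[ℝ] ℝ} (hξ : ξ ∈ NhatF n l₁ l₂ q u) :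
    ξ (x - u) ≤ (l₁ + l₂) * L * κ * ‖ξ‖ * ‖x - u‖ ^ 2 := by
  have hc : 0 ≤ κ * ‖ξ‖ := by positivity
  obtain ⟨lam, hlam, rfl⟩ := exists_mem_boundedMultipliers_gradSum_eq hc
    (apply_le_mul_linearizedResidual (fun i => hq i u) huΓ hκ hmscq hξ)
  simpa only [mul_assoc] using gradSum_apply_sub_le hq hs hL hx hxΓ hu huΓ hc hlam

theorem apply_sub_le_of_mem_Nlim (hq : ∀ i, Differentiable ℝ (q i)) (hs : Convex ℝ s)
    (hL : ∀ i, LipschitzOnWith L (fderiv ℝ (q i)) s) (hκ : 0 ≤ κ) {U : Set (En n)}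
    (hU : IsOpen U) (hUs : U ⊆ s)
    (hmscq : ∀ y ∈ U, infDist y (Gam n l₁ l₂ q) ≤ κ * constraintResidual q y) {x u : En n}
    (hx : x ∈ s) (hxΓ : x ∈ Gam n l₁ l₂ q) (hu : u ∈ U) {ξ : En n →L[ℝ] ℝ}
    (hξ : ξ ∈ Nlim n l₁ l₂ q u) :
    ξ (x - u) ≤ (l₁ + l₂) * L * κ * ‖ξ‖ * ‖x - u‖ ^ 2 := by
  obtain ⟨us, ξs, hmem, hus, hξs⟩ := hξ
  set C : ℝ := (l₁ + l₂) * L * κ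
  have hev : ∀ᶠ k in atTop, ξs k (x - us k) - C * ‖ξs k‖ * ‖x - us k‖ ^ 2 ≤ 0 := by
    filter_upwards [hus.eventually (hU.mem_nhds hu)] with k hk
    exact sub_nonpos.mpr <| apply_sub_le_of_mem_NhatF hq hs hL hκ
      (Filter.mem_of_superset (hU.mem_nhds hk) hmscq) hx hxΓ (hUs hk) (hmem k).1 (hmem k).2
  have hcont : Continuous fun p : (En n →L[ℝ] ℝ) × En n =>
      p.1 (x - p.2) - C * ‖p.1‖ * ‖x - p.2‖ ^ 2 := by fun_prop
  exact sub_nonpos.mp <| le_of_tendsto ((hcont.tendsto (ξ, u)).comp (hξs.prodMk_nhds hus)) hev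

end ProxRegularity

theorem stmt9_general (n l₁ l₂ : ℕ) (q : Fin (l₁ + l₂) → En n → ℝ) (xb : En n)
    (hq : ∀ i, ContDiff ℝ 2 (q i))
    (hmscq : MSCQ n l₁ l₂ q xb) :
    ∀ ξb ∈ Nlim n l₁ l₂ q xb, ∃ r > (0 : ℝ), ∃ ε > (0 : ℝ),
      ∀ x ∈ Metric.closedBall xb ε, x ∈ Gam n l₁ l₂ q →
      ∀ u ∈ Metric.closedBall xb ε, u ∈ Gam n l₁ l₂ q →
      ∀ ξ ∈ Nlim n l₁ l₂ q u, ‖ξ - ξb‖ ≤ ε →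
        ξ (x - u) - r / 2 * ‖x - u‖ ^ 2 ≤ 0 := by
  intro ξb _
  obtain ⟨κ, hκ, U, hU, hres⟩ := hmscq.exists_infDist_le_constraintResidual
  obtain ⟨δ, hδ, hδU⟩ := Metric.mem_nhds_iff.mp hU
  obtain ⟨L, hL⟩ := exists_lipschitzOnWith_fderiv hq (isCompact_closedBall xb (δ / 2))
  have hdiff : ∀ i, Differentiable ℝ (q i) := fun i => (hq i).differentiable (by norm_num)
  have hball : ball xb (δ / 2) ⊆ closedBall xb (δ / 2) := ball_subset_closedBall
  set C : ℝ := (l₁ + l₂) * L * κ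
  refine ⟨2 * C * (‖ξb‖ + 1) + 1, by positivity, min (δ / 4) 1, by positivity, ?_⟩
  intro x hx hxΓ u hu huΓ ξ hξ hξξb
  have hεδ : closedBall xb (min (δ / 4) 1) ⊆ ball xb (δ / 2) :=
    closedBall_subset_ball (by linarith [min_le_left (δ / 4) 1])
  have hest := apply_sub_le_of_mem_Nlim hdiff (convex_closedBall xb (δ / 2)) hL hκ.le
    isOpen_ball hball (fun y hy => hres y (hδU (ball_subset_ball (by linarith) hy)))
    (hball (hεδ hx)) hxΓ (hεδ hu) hξ
  have hξnorm : ‖ξ‖ ≤ ‖ξb‖ + 1 := by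
    linarith [norm_le_norm_add_norm_sub' ξ ξb, min_le_right (δ / 4) 1]
  have hC : 0 ≤ C := by positivity
  nlinarith [mul_le_mul_of_nonneg_left hξnorm hC, sq_nonneg ‖x - u‖]

/-- under MSCQ and BEPP, δ_Γ is prox-regular (and subdifferentially
continuous) at x̄ for every limiting normal x̄*: the quadratic lower estimate holds. -/
theorem stmt9 (n l₁ l₂ : ℕ) (q : Fin (l₁ + l₂) → En n → ℝ) (xb : En n)
    (hq : ∀ i, ContDiff ℝ 2 (q i)) (hfeas : Feas n l₁ l₂ q xb)
    (hmscq : MSCQ n l₁ l₂ q xb) (hbepp : BEPP n l₁ l₂ q xb) :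
    ∀ ξb ∈ Nlim n l₁ l₂ q xb, ∃ r > (0 : ℝ), ∃ ε > (0 : ℝ),
      ∀ x ∈ Metric.closedBall xb ε, x ∈ Gam n l₁ l₂ q →
      ∀ u ∈ Metric.closedBall xb ε, u ∈ Gam n l₁ l₂ q →
      ∀ ξ ∈ Nlim n l₁ l₂ q u, ‖ξ - ξb‖ ≤ ε →
        ξ (x - u) - r / 2 * ‖x - u‖ ^ 2 ≤ 0 :=
  stmt9_general n l₁ l₂ q xb hq hmscq
end

section
/- Let CRCQ hold at x̄ ∈ Γ. Then for all feasible x near x̄ and all x*, v ∈ ℝⁿ with ⟨∇q_i(x),v⟩ = 0 for every i ∈ E ∪ I⁺, where I⁺ = ∪_{λ∈Λ(x,x*)} I⁺(λ), the quadratic form λ ↦ ⟨v, ∇²⟨λ,q⟩(x)v⟩ is constant on Λ(x,x*); consequently Λ(x,x*;v) = Λ(x,x*). -/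
open Metric Set Filter Topology
open scoped RealInnerProductSpace NNReal

/-!
For `λ, μ ∈ Λ(x, x*)` the difference `c = λ - μ` is supported on `E ∪ I⁺` and `∇q(x)*c = 0`,
so it suffices to show `⟨v, ∇²⟨c, q⟩(x) v⟩ = 0`. Choose `B ⊆ E ∪ I⁺` such that the `∇q_i(x)`,
`i ∈ B`, form a basis of the span of the `∇q_i(x)`, `i ∈ E ∪ I⁺`. By CRCQ both families keep
their rank near `x`, so `∇q(y)*c` lies in the span of the `∇q_i(y)`, `i ∈ B`, and by linear
independence its coefficients are `O(‖∇q(y)*c‖) = O(‖y - x‖)`. Since `v` annihilates every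
`∇q_i(x)` with `i ∈ B`, this gives `⟨∇q(y)*c, v⟩ = o(‖y - x‖)`, i.e. `∇²⟨c, q⟩(x)(·, v) = 0`.
-/

theorem LinearIndependent.eventually_norm_le_mul_norm_sum {ι X F : Type*} [Fintype ι]
    [TopologicalSpace X] [NormedAddCommGroup F] [NormedSpace ℝ F] {g : ι → X → F} {x₀ : X}
    (hli : LinearIndependent ℝ fun i => g i x₀) (hg : ∀ i, ContinuousAt (g i) x₀) :
    ∃ C, ∀ᶠ x in 𝓝 x₀, ∀ d : ι → ℝ, ‖d‖ ≤ C * ‖∑ i, d i • g i x‖ := by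
  obtain ⟨K, -, hK⟩ := (Fintype.linearCombination ℝ fun i => g i x₀).exists_antilipschitzWith
    (LinearMap.ker_eq_bot.2 hli.fintypeLinearCombination_injective)
  have hδ : Tendsto (fun x => (K : ℝ) * ∑ i, ‖g i x - g i x₀‖) (𝓝 x₀) (𝓝 0) := by
    simpa using (tendsto_finsetSum _ fun i _ =>
      ((hg i).tendsto.sub_const (g i x₀)).norm).const_mul (K : ℝ)
  refine ⟨2 * K, ?_⟩
  filter_upwards [hδ.eventually (gt_mem_nhds (by norm_num : (0 : ℝ) < 1 / 2))] with x hx d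
  have hperturb : ‖∑ i, d i • g i x₀‖ ≤ ‖∑ i, d i • g i x‖ + ‖d‖ * ∑ i, ‖g i x - g i x₀‖ := by
    calc ‖∑ i, d i • g i x₀‖ = ‖∑ i, d i • g i x - ∑ i, d i • (g i x - g i x₀)‖ := by
          simp [smul_sub]
      _ ≤ ‖∑ i, d i • g i x‖ + ∑ i, ‖d i • (g i x - g i x₀)‖ :=
          (norm_sub_le _ _).trans (add_le_add_right (norm_sum_le _ _) _)
      _ ≤ ‖∑ i, d i • g i x‖ + ‖d‖ * ∑ i, ‖g i x - g i x₀‖ := by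
          rw [Finset.mul_sum]
          gcongr with i
          rw [norm_smul]
          exact mul_le_mul_of_nonneg_right (norm_le_pi_norm d i) (norm_nonneg _)
  have hanti : ‖d‖ ≤ K * ‖∑ i, d i • g i x₀‖ := by
    simpa [Fintype.linearCombination_apply] using hK.le_mul_dist d 0
  nlinarith [norm_nonneg d]

theorem ContinuousLinearMap.comp_eq_zero_of_eventually_mem_span {ι E F G : Type*} [Fintype ι]
    [NormedAddCommGroup E] [NormedSpace ℝ E] [NormedAddCommGroup F] [NormedSpace ℝ F]
    [NormedAddCommGroup G] [NormedSpace ℝ G] {Γ : E → F} {Γ' : E →L[ℝ] F} {g : ι → E → F}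
    {x₀ : E} (ℓ : F →L[ℝ] G) (hΓ : HasFDerivAt Γ Γ' x₀) (hΓ₀ : Γ x₀ = 0)
    (hli : LinearIndependent ℝ fun i => g i x₀) (hg : ∀ i, ContinuousAt (g i) x₀)
    (hℓ : ∀ i, ℓ (g i x₀) = 0)
    (hspan : ∀ᶠ x in 𝓝 x₀, Γ x ∈ Submodule.span ℝ (range fun i => g i x)) :
    ℓ.comp Γ' = 0 := by
  obtain ⟨C, hC⟩ := hli.eventually_norm_le_mul_norm_sum hg
  set ε : E → ℝ := fun x => ∑ i, ‖ℓ (g i x)‖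
  have hε : Tendsto ε (𝓝 x₀) (𝓝 0) := by
    simpa [ε, hℓ] using tendsto_finsetSum _ fun i _ => ((ℓ.continuous.tendsto _).comp (hg i)).norm
  have hbound : ∀ᶠ x in 𝓝 x₀, ‖ℓ (Γ x)‖ ≤ C * (‖Γ x‖ * ε x) := by
    filter_upwards [hC, hspan] with x hCx hx
    obtain ⟨d, hd⟩ := (Submodule.mem_span_range_iff_exists_fun ℝ).1 hx
    rw [← hd, map_sum]
    calc ‖∑ i, ℓ (d i • g i x)‖ ≤ ∑ i, ‖d‖ * ‖ℓ (g i x)‖ := by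
          refine (norm_sum_le _ _).trans (Finset.sum_le_sum fun i _ => ?_)
          rw [map_smul, norm_smul]
          exact mul_le_mul_of_nonneg_right (norm_le_pi_norm d i) (norm_nonneg _)
      _ = ‖d‖ * ε x := (Finset.mul_sum _ _ _).symm
      _ ≤ C * ‖∑ i, d i • g i x‖ * ε x :=
          mul_le_mul_of_nonneg_right (hCx d) (Finset.sum_nonneg fun i _ => norm_nonneg _)
      _ = _ := mul_assoc _ _ _
  have hΓO : Γ =O[𝓝 x₀] fun x => x - x₀ := by simpa [hΓ₀] using hΓ.isBigO_sub
  have hℓΓ : (fun x => ℓ (Γ x)) =o[𝓝 x₀] fun x => x - x₀ := by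
    have := hΓO.norm_norm.mul_isLittleO ((Asymptotics.isLittleO_one_iff ℝ).2 hε)
    refine (Asymptotics.IsBigO.of_bound (g := fun x => ‖Γ x‖ * ε x) C ?_).trans_isLittleO ?_
    · filter_upwards [hbound] with x hx
      rwa [norm_mul, norm_norm, Real.norm_of_nonneg (Finset.sum_nonneg fun i _ => norm_nonneg _)]
    · simpa using this.norm_right
  have hzero : HasFDerivAt (fun x => ℓ (Γ x)) (0 : E →L[ℝ] G) x₀ :=
    .of_isLittleO (by simpa [hΓ₀] using hℓΓ)
  exact (ℓ.hasFDerivAt.comp x₀ hΓ).unique hzero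

namespace ConstraintSystem

open Classical in
/-- The index set `E ∪ I⁺`, with `I⁺` the union of the supports `I⁺(λ)`, `λ ∈ Λ(x, ξ)`. -/
noncomputable def eqOrPosIdx (n l₁ l₂ : ℕ) (q : Fin (l₁ + l₂) → En n → ℝ) (x : En n)
    (ξ : En n →L[ℝ] ℝ) : Finset (Fin (l₁ + l₂)) :=
  Finset.univ.filter fun i => (i : ℕ) < l₁ ∨ ∃ lam ∈ LamSet n l₁ l₂ q x ξ, 0 < lam i

variable {n l₁ l₂ : ℕ} {q : Fin (l₁ + l₂) → En n → ℝ}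

theorem gradSum_sub (x : En n) (lam μ : En (l₁ + l₂)) :
    gradSum n l₁ l₂ q x (lam - μ) = gradSum n l₁ l₂ q x lam - gradSum n l₁ l₂ q x μ := by
  simp only [gradSum, PiLp.sub_apply, sub_smul, Finset.sum_sub_distrib]

theorem quadF_sub (x v : En n) (lam μ : En (l₁ + l₂)) :
    quadF n l₁ l₂ q x v (lam - μ) = quadF n l₁ l₂ q x v lam - quadF n l₁ l₂ q x v μ := by
  simp only [quadF, PiLp.sub_apply, sub_mul, Finset.sum_sub_distrib]

theorem gradSum_mem_span_of_forall_notMem_eq_zero (x : En n) {c : En (l₁ + l₂)}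
    {A : Finset (Fin (l₁ + l₂))} (hc : ∀ i ∉ A, c i = 0) :
    gradSum n l₁ l₂ q x c ∈ Submodule.span ℝ ((fun i => fderiv ℝ (q i) x) '' A) := by
  rw [gradSum, ← Finset.sum_subset A.subset_univ fun i _ hi => by rw [hc i hi, zero_smul]]
  exact Submodule.sum_mem _ fun i hi => Submodule.smul_mem _ _ (Submodule.subset_span ⟨i, hi, rfl⟩)

theorem hasFDerivAt_gradSum (hq : ∀ i, ContDiff ℝ 2 (q i)) (x : En n) (c : En (l₁ + l₂)) :
    HasFDerivAt (fun y => gradSum n l₁ l₂ q y c)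
      (∑ i, c i • fderiv ℝ (fderiv ℝ (q i)) x) x := by
  simp only [gradSum]
  exact HasFDerivAt.fun_sum fun i _ =>
    ((((hq i).fderiv_right (m := 1) le_rfl).differentiable one_ne_zero x).hasFDerivAt).const_smul
      (c i)

theorem quadF_eq_zero_of_eventually_gradSum_mem_span (hq : ∀ i, ContDiff ℝ 2 (q i))
    {x v : En n} {c : En (l₁ + l₂)} {B : Finset (Fin (l₁ + l₂))}
    (hB : LinearIndependent ℝ fun i : B => fderiv ℝ (q i) x)
    (hBv : ∀ i ∈ B, fderiv ℝ (q i) x v = 0) (hc : gradSum n l₁ l₂ q x c = 0)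
    (hspan : ∀ᶠ y in 𝓝 x,
      gradSum n l₁ l₂ q y c ∈ Submodule.span ℝ (range fun i : B => fderiv ℝ (q i) y)) :
    quadF n l₁ l₂ q x v c = 0 := by
  have hcont : ∀ i : B, ContinuousAt (fun y => fderiv ℝ (q i) y) x := fun i =>
    ((hq i).continuous_fderiv (by norm_num)).continuousAt
  have h := ContinuousLinearMap.comp_eq_zero_of_eventually_mem_span
    (ContinuousLinearMap.apply ℝ ℝ v) (hasFDerivAt_gradSum hq x c) hc hB hcont
    (fun i => hBv i.1 i.2) hspan
  simpa [quadF, hessQ, mul_comm] using DFunLike.congr_fun h v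

theorem exists_linearIndependent_span_eq_of_rankA {x : En n} {A : Finset (Fin (l₁ + l₂))}
    (hrank : ∀ᶠ y in 𝓝 x, ∀ A' ⊆ A, rankA n l₁ l₂ q y A' = rankA n l₁ l₂ q x A') :
    ∃ B ⊆ A, LinearIndependent ℝ (fun i : B => fderiv ℝ (q i) x) ∧
      ∀ᶠ y in 𝓝 x, Submodule.span ℝ ((fun i => fderiv ℝ (q i) y) '' A) =
        Submodule.span ℝ ((fun i => fderiv ℝ (q i) y) '' B) := by
  obtain ⟨b, hbA, -, hAb, hb⟩ := exists_linearIndepOn_extension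
    (linearIndepOn_empty ℝ fun i => fderiv ℝ (q i) x) (empty_subset (A : Set (Fin (l₁ + l₂))))
  set B := ((A : Set (Fin (l₁ + l₂))).toFinite.subset hbA).toFinset
  have hB : (B : Set (Fin (l₁ + l₂))) = b := Set.Finite.coe_toFinset _
  have hBA : B ⊆ A := by rw [← Finset.coe_subset, hB]; exact hbA
  have hx : rankA n l₁ l₂ q x B = rankA n l₁ l₂ q x A := by
    rw [rankA, rankA, hB, (Submodule.span_mono (image_mono hbA)).antisymm (Submodule.span_le.2 hAb)]
  refine ⟨B, hBA, by rw [← hB] at hb; exact hb, ?_⟩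
  filter_upwards [hrank] with y hy
  refine (Submodule.eq_of_le_of_finrank_eq (Submodule.span_mono (image_mono hBA)) ?_).symm
  change rankA n l₁ l₂ q y B = rankA n l₁ l₂ q y A
  rw [hy B hBA, hy A subset_rfl, hx]

theorem mem_eqOrPosIdx {x : En n} {ξ : En n →L[ℝ] ℝ} {i : Fin (l₁ + l₂)} :
    i ∈ eqOrPosIdx n l₁ l₂ q x ξ ↔ (i : ℕ) < l₁ ∨ ∃ lam ∈ LamSet n l₁ l₂ q x ξ, 0 < lam i := by
  simp [eqOrPosIdx]

theorem eq_zero_of_notMem_eqOrPosIdx {x : En n} {ξ : En n →L[ℝ] ℝ} {lam : En (l₁ + l₂)}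
    (hlam : lam ∈ LamSet n l₁ l₂ q x ξ) {i : Fin (l₁ + l₂)}
    (hi : i ∉ eqOrPosIdx n l₁ l₂ q x ξ) : lam i = 0 := by
  rw [mem_eqOrPosIdx, not_or, not_lt, not_exists] at hi
  exact le_antisymm (not_lt.1 fun h => hi.2 lam ⟨hlam, h⟩) (hlam.1 i hi.1).1

theorem eqOrPosIdx_subset_activeIdx {x xb : En n} {ξ : En n →L[ℝ] ℝ}
    (hx : ∀ i, q i xb ≠ 0 → q i x ≠ 0) :
    ↑(eqOrPosIdx n l₁ l₂ q x ξ) ⊆ ActiveIdx n l₁ l₂ q xb := by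
  intro i hi
  rcases mem_eqOrPosIdx.1 hi with hE | ⟨lam, hlam, hpos⟩
  · exact Or.inl hE
  · refine or_iff_not_imp_left.2 fun hI => not_not.1 fun hxb => ?_
    exact hpos.ne' ((hlam.1 i (not_lt.1 hI)).2 (hx i hxb))

theorem lamDir_eq_lamSet_of_forall_quadF_eq {x v : En n} {ξ : En n →L[ℝ] ℝ}
    (h : ∀ lam ∈ LamSet n l₁ l₂ q x ξ, ∀ μ ∈ LamSet n l₁ l₂ q x ξ,
      quadF n l₁ l₂ q x v lam = quadF n l₁ l₂ q x v μ) :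
    LamDir n l₁ l₂ q x ξ v = LamSet n l₁ l₂ q x ξ :=
  Subset.antisymm (fun _ hlam => hlam.1) fun _ hlam => ⟨hlam, fun μ hμ => (h μ hμ _ hlam).le⟩

end ConstraintSystem

open ConstraintSystem in
theorem stmt12_general (n l₁ l₂ : ℕ) (q : Fin (l₁ + l₂) → En n → ℝ) (xb : En n)
    (hq : ∀ i, ContDiff ℝ 2 (q i))
    (hcrcq : CRCQ n l₁ l₂ q xb) :
    ∃ U ∈ 𝓝 xb, ∀ x ∈ U, x ∈ Gam n l₁ l₂ q →
      ∀ ξ : En n →L[ℝ] ℝ, ∀ v : En n,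
        (∀ i : Fin (l₁ + l₂),
          ((i : ℕ) < l₁ ∨ ∃ lam ∈ LamSet n l₁ l₂ q x ξ, 0 < lam i) →
          fderiv ℝ (q i) x v = 0) →
        (∀ lam ∈ LamSet n l₁ l₂ q x ξ, ∀ μ ∈ LamSet n l₁ l₂ q x ξ,
          quadF n l₁ l₂ q x v lam = quadF n l₁ l₂ q x v μ) ∧
        LamDir n l₁ l₂ q x ξ v = LamSet n l₁ l₂ q x ξ := by
  obtain ⟨U, hU, hrank⟩ := hcrcq
  have hnear : ∀ᶠ x in 𝓝 xb, (∀ᶠ y in 𝓝 x, y ∈ U) ∧ ∀ i, q i xb ≠ 0 → q i x ≠ 0 :=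
    (eventually_eventually_nhds.2 hU).and <| eventually_all.2 fun i =>
      eventually_imp_distrib_left.2 (hq i).continuous.continuousAt.eventually_ne
  refine ⟨_, hnear, fun x ⟨hxU, hx⟩ _ ξ v hv => ?_⟩
  have hA := eqOrPosIdx_subset_activeIdx (ξ := ξ) hx
  obtain ⟨B, hBA, hB, hspan⟩ := exists_linearIndependent_span_eq_of_rankA (q := q)
    (A := eqOrPosIdx n l₁ l₂ q x ξ) <| hxU.mono fun y hy A' hA' => by
      rw [hrank A' ((Finset.coe_subset.2 hA').trans hA) y hy,
        hrank A' ((Finset.coe_subset.2 hA').trans hA) x hxU.self_of_nhds]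
  have hconst : ∀ lam ∈ LamSet n l₁ l₂ q x ξ, ∀ μ ∈ LamSet n l₁ l₂ q x ξ,
      quadF n l₁ l₂ q x v lam = quadF n l₁ l₂ q x v μ := by
    intro lam hlam μ hμ
    rw [← sub_eq_zero, ← quadF_sub]
    have hc : gradSum n l₁ l₂ q x (lam - μ) = 0 := by rw [gradSum_sub, hlam.2, hμ.2, sub_self]
    refine quadF_eq_zero_of_eventually_gradSum_mem_span hq hB
      (fun i hi => hv i (mem_eqOrPosIdx.1 (hBA hi))) hc ?_
    filter_upwards [hspan] with y hy
    have hmem := gradSum_mem_span_of_forall_notMem_eq_zero (q := q) (c := lam - μ) y fun i hi => by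
      rw [PiLp.sub_apply, eq_zero_of_notMem_eqOrPosIdx hlam hi,
        eq_zero_of_notMem_eqOrPosIdx hμ hi, sub_zero]
    rwa [hy, image_eq_range] at hmem
  exact ⟨hconst, lamDir_eq_lamSet_of_forall_quadF_eq hconst⟩

/-- under CRCQ, for x near x̄ the quadratic form
`λ ↦ ⟨v,∇²⟨λ,q⟩(x)v⟩` is constant on Λ(x,x*) whenever `⟨∇q_i(x),v⟩ = 0` for all
`i ∈ E ∪ I⁺`; consequently Λ(x,x*;v) = Λ(x,x*). -/
theorem stmt12 (n l₁ l₂ : ℕ) (q : Fin (l₁ + l₂) → En n → ℝ) (xb : En n)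
    (hq : ∀ i, ContDiff ℝ 2 (q i)) (hfeas : Feas n l₁ l₂ q xb)
    (hcrcq : CRCQ n l₁ l₂ q xb) :
    ∃ U ∈ 𝓝 xb, ∀ x ∈ U, x ∈ Gam n l₁ l₂ q →
      ∀ ξ : En n →L[ℝ] ℝ, ∀ v : En n,
        (∀ i : Fin (l₁ + l₂),
          ((i : ℕ) < l₁ ∨ ∃ lam ∈ LamSet n l₁ l₂ q x ξ, 0 < lam i) →
          fderiv ℝ (q i) x v = 0) →
        (∀ lam ∈ LamSet n l₁ l₂ q x ξ, ∀ μ ∈ LamSet n l₁ l₂ q x ξ,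
          quadF n l₁ l₂ q x v lam = quadF n l₁ l₂ q x v μ) ∧
        LamDir n l₁ l₂ q x ξ v = LamSet n l₁ l₂ q x ξ :=
  stmt12_general n l₁ l₂ q xb hq hcrcq
end

section
/- If MSCQ, BEPP, and the KKT condition hold at x̄ and the critical cone is trivial, K(x̄,−∇φ(x̄)) = {0}, then for all sufficiently small γ > 0 there is a neighborhood V of 0 ∈ ℝⁿ such that argmin{φ(x) + δ_Γ(x) − ⟨v*,x⟩ : x ∈ B_γ(x̄)} = {x̄} for all v* ∈ V; in particular x̄ is a tilt-stable minimizer with exact tilt-stability bound 0. -/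
open Metric Set Filter Topology
open scoped RealInnerProductSpace NNReal

/-!
KKT makes `∇φ(x̄)` nonnegative on the Bouligand tangent cone of `Γ`, and a tangent direction
where it vanishes lies in the critical cone; so `∇φ(x̄)` is positive on nonzero tangent
directions. Compactness of the unit sphere turns this into linear growth
`φ x̄ + c ‖x - x̄‖ ≤ φ x` on `Γ` near `x̄`, which survives every tilt with `‖v*‖ < c`.
Hence `x̄` is the unique minimizer of each slightly tilted problem, and the argmin map is
constant near `0`.
-/

section LinearGrowth

variable {E : Type*} [NormedAddCommGroup E] [NormedSpace ℝ E] {s : Set E} {a : E}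

theorem exists_unit_mem_posTangentConeAt_of_tendsto [ProperSpace E] {x : ℕ → E}
    (hxs : ∀ k, x k ∈ s) (hxa : ∀ k, x k ≠ a) (hx : Tendsto x atTop (𝓝 a)) :
    ∃ u, ‖u‖ = 1 ∧ u ∈ posTangentConeAt s a ∧ ∃ g : ℕ → ℕ, StrictMono g ∧
      Tendsto (fun k ↦ ‖x (g k) - a‖⁻¹ • (x (g k) - a)) atTop (𝓝 u) := by
  have hunit : ∀ k, ‖x k - a‖⁻¹ • (x k - a) ∈ sphere (0 : E) 1 := fun k ↦ by
    rw [mem_sphere_zero_iff_norm, norm_smul, norm_inv, norm_norm,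
      inv_mul_cancel₀ (norm_ne_zero_iff.mpr (sub_ne_zero.mpr (hxa k)))]
  obtain ⟨u, hu, g, hg, hlim⟩ := (isCompact_sphere (0 : E) 1).tendsto_subseq hunit
  refine ⟨u, mem_sphere_zero_iff_norm.mp hu, ?_, g, hg, hlim⟩
  refine mem_tangentConeAt_of_seq atTop (fun k ↦ ‖x (g k) - a‖₊⁻¹) (fun k ↦ x (g k) - a)
    ?_ (.of_forall fun k ↦ by simpa using hxs (g k)) ?_
  · simpa using (hx.comp hg.tendsto_atTop).sub_const a
  · simpa [NNReal.smul_def, Function.comp_def] using hlim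

theorem exists_linear_growth_of_pos_on_posTangentConeAt [ProperSpace E] {f : E → ℝ}
    {f' : E →L[ℝ] ℝ} (hf : HasFDerivWithinAt f f' s a)
    (hpos : ∀ u ∈ posTangentConeAt s a, u ≠ 0 → 0 < f' u) :
    ∃ c > 0, ∃ δ > 0, ∀ x ∈ s, dist x a < δ → f a + c * ‖x - a‖ ≤ f x := by
  by_contra! h
  choose x hxs hxd hxf using fun k : ℕ ↦
    h (1 / (k + 1)) Nat.one_div_pos_of_nat (1 / (k + 1)) Nat.one_div_pos_of_nat
  have hxa : ∀ k, x k ≠ a := fun k hk ↦ by simpa [hk] using hxf k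
  have hx : Tendsto x atTop (𝓝 a) := tendsto_iff_dist_tendsto_zero.mpr <|
    squeeze_zero (fun _ ↦ dist_nonneg) (fun k ↦ (hxd k).le) tendsto_one_div_add_atTop_nhds_zero_nat
  obtain ⟨u, hu1, hu, g, hg, hlim⟩ := exists_unit_mem_posTangentConeAt_of_tendsto hxs hxa hx
  have hslope := hf.lim (c := fun k ↦ ‖x (g k) - a‖⁻¹) (d := fun k ↦ x (g k) - a)
    (by simpa using (hx.comp hg.tendsto_atTop).sub_const a)
    (.of_forall fun k ↦ by simpa using hxs (g k)) hlim
  simp only [add_sub_cancel, smul_eq_mul] at hslope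
  have hbound : ∀ k, ‖x (g k) - a‖⁻¹ * (f (x (g k)) - f a) ≤ 1 / ((g k : ℝ) + 1) := fun k ↦ by
    rw [inv_mul_le_iff₀ (norm_pos_iff.mpr (sub_ne_zero.mpr (hxa (g k))))]
    linarith [hxf (g k)]
  have hle : f' u ≤ 0 := le_of_tendsto_of_tendsto' hslope
    (tendsto_one_div_add_atTop_nhds_zero_nat.comp hg.tendsto_atTop) hbound
  exact hle.not_gt (hpos u hu (by rintro rfl; simp at hu1))

end LinearGrowth

theorem tilted_linear_growth {F : Type*} [NormedAddCommGroup F] [InnerProductSpace ℝ F]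
    {f : F → ℝ} {a z : F} {c : ℝ} (v : F) (h : f a + c * ‖z - a‖ ≤ f z) :
    f a - ⟪v, a⟫ + (c - ‖v‖) * ‖z - a‖ ≤ f z - ⟪v, z⟫ := by
  have hv : ⟪v, z⟫ - ⟪v, a⟫ ≤ ‖v‖ * ‖z - a‖ := by
    rw [← inner_sub_right]
    exact real_inner_le_norm v (z - a)
  linarith

section Constraints

variable {n l₁ l₂ : ℕ} {q : Fin (l₁ + l₂) → En n → ℝ} {xb u : En n} {i : Fin (l₁ + l₂)}

theorem fderiv_eq_zero_of_mem_posTangentConeAt (hfeas : Feas n l₁ l₂ q xb)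
    (hqi : DifferentiableAt ℝ (q i) xb) (hi : (i : ℕ) < l₁)
    (hu : u ∈ posTangentConeAt (Gam n l₁ l₂ q) xb) : fderiv ℝ (q i) xb u = 0 := by
  have hconst : ∀ x ∈ Gam n l₁ l₂ q, q i x = q i xb := fun x hx ↦
    ((hx i).1 hi).trans ((hfeas i).1 hi).symm
  have hmax : IsLocalMaxOn (q i) (Gam n l₁ l₂ q) xb :=
    Filter.eventually_of_mem self_mem_nhdsWithin fun x hx ↦ (hconst x hx).le
  have hmin : IsLocalMinOn (q i) (Gam n l₁ l₂ q) xb :=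
    Filter.eventually_of_mem self_mem_nhdsWithin fun x hx ↦ (hconst x hx).ge
  exact le_antisymm (hmax.hasFDerivWithinAt_nonpos hqi.hasFDerivAt.hasFDerivWithinAt hu)
    (hmin.hasFDerivWithinAt_nonneg hqi.hasFDerivAt.hasFDerivWithinAt hu)

theorem fderiv_nonpos_of_mem_posTangentConeAt (hqi : DifferentiableAt ℝ (q i) xb)
    (hi : l₁ ≤ (i : ℕ)) (hact : q i xb = 0)
    (hu : u ∈ posTangentConeAt (Gam n l₁ l₂ q) xb) : fderiv ℝ (q i) xb u ≤ 0 := by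
  have hmax : IsLocalMaxOn (q i) (Gam n l₁ l₂ q) xb :=
    Filter.eventually_of_mem self_mem_nhdsWithin fun x hx ↦ hact ▸ (hx i).2 hi
  exact hmax.hasFDerivWithinAt_nonpos hqi.hasFDerivAt.hasFDerivWithinAt hu

theorem KKT.fderiv_nonneg_of_mem_posTangentConeAt {φ : En n → ℝ} (hkkt : KKT n l₁ l₂ q xb φ)
    (hfeas : Feas n l₁ l₂ q xb) (hq : ∀ i, DifferentiableAt ℝ (q i) xb)
    (hu : u ∈ posTangentConeAt (Gam n l₁ l₂ q) xb) : 0 ≤ fderiv ℝ φ xb u := by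
  obtain ⟨lam, hlam, hstat⟩ := hkkt
  have hterm : ∀ i, lam i * fderiv ℝ (q i) xb u ≤ 0 := fun i ↦ by
    rcases lt_or_ge (i : ℕ) l₁ with hi | hi
    · simp [fderiv_eq_zero_of_mem_posTangentConeAt hfeas (hq i) hi hu]
    · by_cases hact : q i xb = 0
      · exact mul_nonpos_of_nonneg_of_nonpos (hlam i hi).1
          (fderiv_nonpos_of_mem_posTangentConeAt (hq i) hi hact hu)
      · simp [(hlam i hi).2 hact]
  have hsum : fderiv ℝ φ xb u = -∑ i, lam i * fderiv ℝ (q i) xb u := by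
    simpa [gradSum, eq_neg_iff_add_eq_zero] using congrArg (· u) hstat
  rw [hsum, neg_nonneg]
  exact Finset.sum_nonpos fun i _ ↦ hterm i

/- `Kcone` is built on `tangentConeAt ℝ`, which contains the Bouligand cone
`posTangentConeAt` (and its negative). -/
theorem fderiv_pos_of_Kcone_eq_zero {φ : En n → ℝ} (hkkt : KKT n l₁ l₂ q xb φ)
    (hfeas : Feas n l₁ l₂ q xb) (hq : ∀ i, DifferentiableAt ℝ (q i) xb)
    (hK : Kcone n l₁ l₂ q xb (-(fderiv ℝ φ xb)) = {0})
    (hu : u ∈ posTangentConeAt (Gam n l₁ l₂ q) xb) (hu0 : u ≠ 0) : 0 < fderiv ℝ φ xb u := by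
  refine (hkkt.fderiv_nonneg_of_mem_posTangentConeAt hfeas hq hu).lt_of_ne fun h ↦ hu0 ?_
  have huK : u ∈ Kcone n l₁ l₂ q xb (-(fderiv ℝ φ xb)) :=
    ⟨tangentConeAt_mono_field hu, by simp [← h]⟩
  rwa [hK] at huK

theorem argminSet_eq_singleton_of_linear_growth {φ : En n → ℝ} {c γ : ℝ} {v : En n}
    (hfeas : Feas n l₁ l₂ q xb) (hγ : 0 ≤ γ) (hv : ‖v‖ < c)
    (hgrowth : ∀ x ∈ Gam n l₁ l₂ q, dist x xb ≤ γ → φ xb + c * ‖x - xb‖ ≤ φ x) :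
    ArgminSet n l₁ l₂ q xb φ γ v = {xb} := by
  have hxb : xb ∈ closedBall xb γ := mem_closedBall_self hγ
  have htilt : ∀ x ∈ Gam n l₁ l₂ q, x ∈ closedBall xb γ →
      φ xb - ⟪v, xb⟫ + (c - ‖v‖) * ‖x - xb‖ ≤ φ x - ⟪v, x⟫ := fun x hx hxγ ↦
    tilted_linear_growth v (hgrowth x hx hxγ)
  ext x
  refine ⟨fun ⟨hx, hxγ, hmin⟩ ↦ ?_, ?_⟩
  · have hgrow := htilt x hx hxγ
    have hle := hmin xb hfeas hxb
    have hnorm : ‖x - xb‖ ≤ 0 := by nlinarith [norm_nonneg (x - xb)]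
    exact sub_eq_zero.mp (norm_le_zero_iff.mp hnorm)
  · rintro rfl
    refine ⟨hfeas, hxb, fun y hy hyγ ↦ ?_⟩
    nlinarith [htilt y hy hyγ, norm_nonneg (y - x)]

end Constraints

theorem stmt15_general (n l₁ l₂ : ℕ) (q : Fin (l₁ + l₂) → En n → ℝ) (xb : En n) (φ : En n → ℝ)
    (hq : ∀ i, ContDiff ℝ 2 (q i)) (hφ : ContDiff ℝ 2 φ)
    (hfeas : Feas n l₁ l₂ q xb)
    (hkkt : KKT n l₁ l₂ q xb φ)
    (hK : Kcone n l₁ l₂ q xb (-(fderiv ℝ φ xb)) = {0}) :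
    (∃ γ₀ > (0 : ℝ), ∀ γ : ℝ, 0 < γ → γ < γ₀ → ∃ V ∈ 𝓝 (0 : En n),
      ∀ v ∈ V, ArgminSet n l₁ l₂ q xb φ γ v = {xb}) ∧
    ∀ κ > (0 : ℝ), TiltStableMod n l₁ l₂ q xb φ κ := by
  have hqd : ∀ i, DifferentiableAt ℝ (q i) xb := fun i ↦
    (hq i).contDiffAt.differentiableAt (by norm_num)
  have hφd : DifferentiableAt ℝ φ xb := hφ.contDiffAt.differentiableAt (by norm_num)
  obtain ⟨c, hc, δ, hδ, hgrowth⟩ := exists_linear_growth_of_pos_on_posTangentConeAt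
    hφd.hasFDerivAt.hasFDerivWithinAt fun u hu hu0 ↦
      fderiv_pos_of_Kcone_eq_zero hkkt hfeas hqd hK hu hu0
  have hargmin : ∀ γ, 0 < γ → γ < δ → ∀ v ∈ ball (0 : En n) c,
      ArgminSet n l₁ l₂ q xb φ γ v = {xb} := fun γ hγ hγδ v hv ↦
    argminSet_eq_singleton_of_linear_growth hfeas hγ.le (mem_ball_zero_iff.mp hv)
      fun x hx hxγ ↦ hgrowth x hx (hxγ.trans_lt hγδ)
  refine ⟨⟨δ, hδ, fun γ hγ hγδ ↦ ⟨ball 0 c, ball_mem_nhds 0 hc, hargmin γ hγ hγδ⟩⟩,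
    fun κ _ ↦ ⟨δ / 2, half_pos hδ, c, hc, fun _ ↦ xb, rfl, ?_,
      hargmin _ (half_pos hδ) (half_lt_self hδ)⟩⟩
  exact (LipschitzWith.const' xb).lipschitzOnWith.weaken zero_le

/-- if MSCQ, BEPP and KKT hold at x̄ and the critical cone is trivial,
then the localized argminimum mapping is constantly {x̄} near the zero tilt; in
particular x̄ is tilt-stable with every modulus κ > 0 (exact bound 0). -/
theorem stmt15 (n l₁ l₂ : ℕ) (q : Fin (l₁ + l₂) → En n → ℝ) (xb : En n) (φ : En n → ℝ)
    (hq : ∀ i, ContDiff ℝ 2 (q i)) (hφ : ContDiff ℝ 2 φ)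
    (hfeas : Feas n l₁ l₂ q xb)
    (hmscq : MSCQ n l₁ l₂ q xb) (hbepp : BEPP n l₁ l₂ q xb)
    (hkkt : KKT n l₁ l₂ q xb φ)
    (hK : Kcone n l₁ l₂ q xb (-(fderiv ℝ φ xb)) = {0}) :
    (∃ γ₀ > (0 : ℝ), ∀ γ : ℝ, 0 < γ → γ < γ₀ → ∃ V ∈ 𝓝 (0 : En n),
      ∀ v ∈ V, ArgminSet n l₁ l₂ q xb φ γ v = {xb}) ∧
    ∀ κ > (0 : ℝ), TiltStableMod n l₁ l₂ q xb φ κ :=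
  stmt15_general n l₁ l₂ q xb φ hq hφ hfeas hkkt hK
end

section
/- (Failure of tilt stability in Example 8.4.) For the NLP: minimize φ(x) = −x₁ + x₂²/2 subject to q₁(x) = x₁ − x₂⁴ + x₃² ≤ 0, q₂(x) = x₁ ≤ 0 in ℝ³, the point x̄ = (0,0,0) is not a tilt-stable local minimizer: for each u ≠ 0 the tilted problem minimize −x₁ + x₂²/2 − u x₂ over the feasible set has the two distinct local solutions (0, u, u²) and (0, u, −u²) in any ball around x̄, so the localized argminimum mapping is not single-valued near the zero tilt. -/
open Metric Set Filter Topology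
open scoped RealInnerProductSpace NNReal

/-- The feasible set of Example 8.4. -/
def Gam19 : Set (En 3) := {x | x 0 - x 1 ^ 4 + x 2 ^ 2 ≤ 0 ∧ x 0 ≤ 0}

/-- The cost function of Example 8.4. -/
noncomputable def phi19 (x : En 3) : ℝ := -x 0 + x 1 ^ 2 / 2

/-- The localized argminimum mapping of the tilted problems in Example 8.4. -/
def M19 (γ : ℝ) (v : En 3) : Set (En 3) :=
  {x | x ∈ Gam19 ∧ x ∈ Metric.closedBall (0 : En 3) γ ∧
    ∀ y ∈ Gam19, y ∈ Metric.closedBall (0 : En 3) γ →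
      phi19 x - @inner ℝ _ _ v x ≤ phi19 y - @inner ℝ _ _ v y}

/-- The point (a,b,c) ∈ ℝ³. -/
noncomputable def pt19 (a b c : ℝ) : En 3 := (WithLp.equiv 2 (Fin 3 → ℝ)).symm ![a, b, c]

/-! On `Gam19` one has `x₁ ≤ 0`, so the tilted cost `-x₁ + x₂²/2 - u x₂` is at least `-u²/2`, with
equality whenever `x₁ = 0` and `x₂ = u`. The constraint `x₃² ≤ x₂⁴` then admits both `x₃ = ±u²`, and these
points lie in any ball around `0` once `u` is small, so no localization of the argminimum map is
single-valued. -/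

@[simp] lemma pt19_apply_zero (a b c : ℝ) : pt19 a b c 0 = a := rfl

@[simp] lemma pt19_apply_one (a b c : ℝ) : pt19 a b c 1 = b := rfl

@[simp] lemma pt19_apply_two (a b c : ℝ) : pt19 a b c 2 = c := rfl

lemma norm_pt19 (a b c : ℝ) : ‖pt19 a b c‖ = √(a ^ 2 + b ^ 2 + c ^ 2) := by
  simp [EuclideanSpace.norm_eq, Fin.sum_univ_three]

lemma norm_pt19_tilt (u : ℝ) : ‖pt19 0 u 0‖ = |u| := by
  simp [norm_pt19, Real.sqrt_sq_eq_abs]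

lemma norm_pt19_le {u c : ℝ} (hc : c ^ 2 = u ^ 4) (hu : |u| ≤ 1) : ‖pt19 0 u c‖ ≤ 2 * |u| := by
  rw [norm_pt19, Real.sqrt_le_left (by positivity), hc]
  have hu2 : u ^ 2 ≤ 1 := by nlinarith [sq_abs u, abs_nonneg u]
  nlinarith [sq_abs u, sq_nonneg u]

lemma inner_pt19_tilt (u : ℝ) (y : En 3) : ⟪pt19 0 u 0, y⟫ = u * y 1 := by
  simp [PiLp.inner_apply, Fin.sum_univ_three, mul_comm]

lemma pt19_mem_Gam19 {u c : ℝ} (hc : c ^ 2 = u ^ 4) : pt19 0 u c ∈ Gam19 := by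
  simp [Gam19, hc]

lemma tilted_phi19_ge {y : En 3} (hy : y ∈ Gam19) (u : ℝ) :
    -(u ^ 2 / 2) ≤ phi19 y - ⟪pt19 0 u 0, y⟫ := by
  rw [phi19, inner_pt19_tilt]
  nlinarith [hy.2, sq_nonneg (y 1 - u)]

lemma tilted_phi19_pt19 {u c : ℝ} :
    phi19 (pt19 0 u c) - ⟪pt19 0 u 0, pt19 0 u c⟫ = -(u ^ 2 / 2) := by
  rw [phi19, inner_pt19_tilt]
  simp only [pt19_apply_zero, pt19_apply_one]
  ring

lemma pt19_mem_M19 {γ u c : ℝ} (hc : c ^ 2 = u ^ 4) (hγ : ‖pt19 0 u c‖ ≤ γ) :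
    pt19 0 u c ∈ M19 γ (pt19 0 u 0) :=
  ⟨pt19_mem_Gam19 hc, mem_closedBall_zero_iff.2 hγ, fun _ hy _ ↦
    tilted_phi19_pt19 ▸ tilted_phi19_ge hy u⟩

lemma exists_two_tilted_minimizers (γ : ℝ) (hγ : 0 < γ) :
    ∃ ε > (0 : ℝ), ∀ u : ℝ, u ≠ 0 → |u| < ε →
      pt19 0 u (u ^ 2) ∈ M19 γ (pt19 0 u 0) ∧
      pt19 0 u (-(u ^ 2)) ∈ M19 γ (pt19 0 u 0) ∧
      pt19 0 u (u ^ 2) ≠ pt19 0 u (-(u ^ 2)) := by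
  refine ⟨min 1 (γ / 2), by positivity, fun u hu huε ↦ ?_⟩
  have hu1 : |u| ≤ 1 := (huε.trans_le (min_le_left _ _)).le
  have huγ : 2 * |u| ≤ γ := by linarith [huε.trans_le (min_le_right _ _)]
  have hmem : ∀ c : ℝ, c ^ 2 = u ^ 4 → pt19 0 u c ∈ M19 γ (pt19 0 u 0) :=
    fun c hc ↦ pt19_mem_M19 hc ((norm_pt19_le hc hu1).trans huγ)
  refine ⟨hmem _ (by ring), hmem _ (by ring), fun h ↦ ?_⟩
  have h2 : u ^ 2 = -(u ^ 2) := by simpa using congrArg (· 2) h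
  exact hu (pow_eq_zero_iff two_ne_zero |>.1 (by linarith))

lemma not_exists_eq_singleton_of_two_mem {X E : Type*} [PseudoMetricSpace E]
    (M : ℝ → E → Set X) (v₀ : E)
    (h : ∀ γ > (0 : ℝ), ∀ δ > (0 : ℝ), ∃ v ∈ ball v₀ δ, ∃ x ∈ M γ v, ∃ y ∈ M γ v, x ≠ y) :
    ¬ ∃ γ > (0 : ℝ), ∃ δ > (0 : ℝ), ∃ m : E → X, ∀ v ∈ ball v₀ δ, M γ v = {m v} := by
  rintro ⟨γ, hγ, δ, hδ, m, hm⟩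
  obtain ⟨v, hv, x, hx, y, hy, hxy⟩ := h γ hγ δ hδ
  rw [hm v hv] at hx hy
  exact hxy (hx.trans hy.symm)

/-- in Example 8.4, for every localization radius γ and every small
tilt (0,u,0) with u ≠ 0 the tilted problem has the two distinct local solutions
(0,u,±u²); hence x̄ = 0 is not a tilt-stable local minimizer. -/
theorem stmt19 :
    (∀ γ > (0 : ℝ), ∃ ε > (0 : ℝ), ∀ u : ℝ, u ≠ 0 → |u| < ε →
      pt19 0 u (u ^ 2) ∈ M19 γ (pt19 0 u 0) ∧
      pt19 0 u (-(u ^ 2)) ∈ M19 γ (pt19 0 u 0) ∧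
      pt19 0 u (u ^ 2) ≠ pt19 0 u (-(u ^ 2))) ∧
    ¬ (∃ K : ℝ≥0, ∃ γ > (0 : ℝ), ∃ δ > (0 : ℝ), ∃ m₀ : En 3 → En 3,
        m₀ 0 = 0 ∧ LipschitzOnWith K m₀ (Metric.ball (0 : En 3) δ) ∧
        ∀ v ∈ Metric.ball (0 : En 3) δ, M19 γ v = {m₀ v}) := by
  refine ⟨exists_two_tilted_minimizers, ?_⟩
  rintro ⟨-, γ, hγ, δ, hδ, m₀, -, -, hm₀⟩
  refine not_exists_eq_singleton_of_two_mem M19 0 (fun γ hγ δ hδ ↦ ?_) ⟨γ, hγ, δ, hδ, m₀, hm₀⟩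
  obtain ⟨ε, hε, htwo⟩ := exists_two_tilted_minimizers γ hγ
  set u := min ε δ / 2
  have hu : 0 < u := by positivity
  have hu_lt : u < min ε δ := half_lt_self (lt_min hε hδ)
  have hu_abs : |u| = u := abs_of_pos hu
  obtain ⟨hplus, hminus, hne⟩ :=
    htwo u hu.ne' (by rw [hu_abs]; exact hu_lt.trans_le (min_le_left _ _))
  refine ⟨pt19 0 u 0, ?_, _, hplus, _, hminus, hne⟩
  rw [mem_ball_zero_iff, norm_pt19_tilt, hu_abs]
  exact hu_lt.trans_le (min_le_right _ _)
end
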